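/- arXiv:2103.11669 — 10 statements merged into one kernel-verified Lean document; each statement's English description precedes it below -/
import Mathlib

section
/- In the toy gadget setting: (1) for every k with 0 ≤ k ≤ K/2 one has K·|T_k| = (K−k)·m^n; (2) for every k ∈ [K/2] one has K·|S̃_k| = m^n. -/
/-- The weight of a point of the cube `[m]^n`. -/
def wt {n m : ℕ} (x : Fin n → Fin m) : ℕ := ∑ j, (x j : ℕ)

/-- The nested sets `T_k` of the toy gadget: `T_k = {y ∈ [m]^n :
y_{J_s} < m − m/(K−s) for all s < k}`. -/
def Tset (n m K : ℕ) (J : ℕ → Fin n) (k : ℕ) : Set (Fin n → Fin m) :=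
  {y | ∀ s < k, (y (J s) : ℕ) < m - m / (K - s)}

/-- The label sets `S̃_k = {x ∈ T_k : wt(x) mod W < W/(K−k)}`. -/
def Sset (n m K W : ℕ) (J : ℕ → Fin n) (k : ℕ) : Set (Fin n → Fin m) :=
  {x | x ∈ Tset n m K J k ∧ wt x % W < W / (K - k)}

/-- `T_k^j = {y ∈ T_k : y_j < m − m/(K−k)}`. -/
def Tj (n m K : ℕ) (J : ℕ → Fin n) (k : ℕ) (j : Fin n) : Set (Fin n → Fin m) :=
  {y | y ∈ Tset n m K J k ∧ (y j : ℕ) < m - m / (K - k)}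

/-- `S̃_k^j = {x ∈ S̃_k : x_j < m − m/(K−k)}`. -/
def Sj (n m K W : ℕ) (J : ℕ → Fin n) (k : ℕ) (j : Fin n) : Set (Fin n → Fin m) :=
  {x | x ∈ Sset n m K W J k ∧ (x j : ℕ) < m - m / (K - k)}

/-- The coordinate line through `x` in direction `j`. -/
def lineSet {n m : ℕ} (j : Fin n) (x : Fin n → Fin m) : Set (Fin n → Fin m) :=
  {x' | ∀ i, i ≠ j → x' i = x i}

/-- The edge set `E_{k,j} = {(u,v) ∈ S̃_k^j × (T_k ∖ T_k^j) : u_i = v_i for all i ≠ j}`. -/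
def Eset (n m K W : ℕ) (J : ℕ → Fin n) (k : ℕ) (j : Fin n) :
    Set ((Fin n → Fin m) × (Fin n → Fin m)) :=
  {p | p.1 ∈ Sj n m K W J k j ∧ p.2 ∈ Tset n m K J k \ Tj n m K J k j ∧
    ∀ i, i ≠ j → p.1 i = p.2 i}


/-- Counting residues: exactly `t` of the `M` shifts land below `t`. -/
lemma count_res (M t : ℕ) (ht : t ≤ M) (x : ℕ) :
    ((Finset.range M).filter fun d => (x + d) % M < t).card = t := by
  induction x with
  | zero =>
    have h : ((Finset.range M).filter fun d => (0 + d) % M < t) = Finset.range t := by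
      ext d
      simp only [Finset.mem_filter, Finset.mem_range, Nat.zero_add]
      constructor
      · rintro ⟨hd, h⟩; rwa [Nat.mod_eq_of_lt hd] at h
      · intro h
        exact ⟨lt_of_lt_of_le h ht, by rwa [Nat.mod_eq_of_lt (lt_of_lt_of_le h ht)]⟩
    rw [h, Finset.card_range]
  | succ x ih =>
    refine Eq.trans ?_ ih
    apply Finset.card_bij' (fun d _ => (d + 1) % M) (fun d _ => (d + (M - 1)) % M)
    · intro d hd
      simp only [Finset.mem_filter, Finset.mem_range] at hd ⊢
      have hM : 0 < M := lt_of_le_of_lt (Nat.zero_le d) hd.1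
      refine ⟨Nat.mod_lt _ hM, ?_⟩
      rw [Nat.add_mod_mod, show x + (d + 1) = x + 1 + d by omega]
      exact hd.2
    · intro d hd
      simp only [Finset.mem_filter, Finset.mem_range] at hd ⊢
      have hM : 0 < M := lt_of_le_of_lt (Nat.zero_le d) hd.1
      refine ⟨Nat.mod_lt _ hM, ?_⟩
      rw [Nat.add_mod_mod, show x + 1 + (d + (M - 1)) = x + d + M by omega,
        Nat.add_mod_right]
      exact hd.2
    · intro d hd
      simp only [Finset.mem_filter, Finset.mem_range] at hd
      have hM : 0 < M := lt_of_le_of_lt (Nat.zero_le d) hd.1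
      rw [Nat.mod_add_mod, show d + 1 + (M - 1) = d + M by omega, Nat.add_mod_right,
        Nat.mod_eq_of_lt hd.1]
    · intro d hd
      simp only [Finset.mem_filter, Finset.mem_range] at hd
      have hM : 0 < M := lt_of_le_of_lt (Nat.zero_le d) hd.1
      rw [Nat.mod_add_mod, show d + (M - 1) + 1 = d + M by omega, Nat.add_mod_right,
        Nat.mod_eq_of_lt hd.1]

/-- Master double counting lemma. -/
lemma master {α : Type*} [Fintype α] [DecidableEq α] (M t : ℕ) (ht : t ≤ M)
    (T : Finset α) (f g : α → α) (φ : α → ℕ)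
    (hfT : ∀ y ∈ T, f y ∈ T) (hgT : ∀ y ∈ T, g y ∈ T)
    (hgf : ∀ y ∈ T, g (f y) = y) (hfg : ∀ y ∈ T, f (g y) = y)
    (hφ : ∀ y ∈ T, φ (f y) % M = (φ y + 1) % M) :
    (T.filter fun y => φ y % M < t).card * M = T.card * t := by
  classical
  have addc : ∀ a b d : ℕ, a % M = b % M → (a + d) % M = (b + d) % M := by
    intro a b d h
    rw [← Nat.mod_add_mod, h, Nat.mod_add_mod]
  have key : ∀ d, (T.filter fun y => (φ y + d) % M < t).card
      = (T.filter fun y => φ y % M < t).card := by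
    intro d
    induction d with
    | zero => simp
    | succ d ih =>
      rw [← ih]
      apply Finset.card_bij' (fun y _ => f y) (fun y _ => g y)
      · intro y hy
        simp only [Finset.mem_filter] at hy ⊢
        refine ⟨hfT y hy.1, ?_⟩
        have h1 : (φ (f y) + d) % M = (φ y + 1 + d) % M := addc _ _ d (hφ y hy.1)
        rw [h1, show φ y + 1 + d = φ y + (d + 1) by omega]
        exact hy.2
      · intro z hz
        simp only [Finset.mem_filter] at hz ⊢
        refine ⟨hgT z hz.1, ?_⟩
        have h0 : φ (f (g z)) % M = (φ (g z) + 1) % M := hφ (g z) (hgT z hz.1)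
        rw [hfg z hz.1] at h0
        have h1 : (φ z + d) % M = (φ (g z) + 1 + d) % M := addc _ _ d h0
        rw [show φ (g z) + (d + 1) = φ (g z) + 1 + d by omega, ← h1]
        exact hz.2
      · intro y hy
        simp only [Finset.mem_filter] at hy
        exact hgf y hy.1
      · intro z hz
        simp only [Finset.mem_filter] at hz
        exact hfg z hz.1
  have h2 : ∑ d ∈ Finset.range M, (T.filter fun y => (φ y + d) % M < t).card
      = T.card * t := by
    have e1 : ∀ d ∈ Finset.range M, (T.filter fun y => (φ y + d) % M < t).card
        = ∑ y ∈ T, if (φ y + d) % M < t then 1 else 0 := fun d _ =>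
      Finset.card_filter _ _
    rw [Finset.sum_congr rfl e1, Finset.sum_comm]
    have e2 : ∀ y ∈ T, (∑ d ∈ Finset.range M, if (φ y + d) % M < t then 1 else 0) = t := by
      intro y _
      rw [← Finset.card_filter]
      exact count_res M t ht (φ y)
    rw [Finset.sum_congr rfl e2, Finset.sum_const, smul_eq_mul]
  calc (T.filter fun y => φ y % M < t).card * M
      = ∑ d ∈ Finset.range M, (T.filter fun y => φ y % M < t).card := by
        rw [Finset.sum_const, Finset.card_range, smul_eq_mul, Nat.mul_comm]
    _ = ∑ d ∈ Finset.range M, (T.filter fun y => (φ y + d) % M < t).card :=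
        Finset.sum_congr rfl fun d _ => (key d).symm
    _ = T.card * t := h2

/-- A weight identity for coordinate updates. -/
lemma wt_update {n m : ℕ} (y : Fin n → Fin m) (j : Fin n) (a : Fin m) :
    wt (Function.update y j a) + (y j : ℕ) = wt y + (a : ℕ) := by
  classical
  unfold wt
  have h1 : (fun i => ((Function.update y j a i : ℕ))) =
      Function.update (fun i => (y i : ℕ)) j (a : ℕ) :=
    funext fun i => Function.apply_update (fun (_ : Fin n) (x : Fin m) => x.val) y j a i
  calc (∑ i, ((Function.update y j a) i : ℕ)) + (y j : ℕ)
      = (∑ i, (Function.update (fun i => (y i : ℕ)) j (a : ℕ)) i) + (y j : ℕ) := by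
        rw [show (fun i => ((Function.update y j a) i : ℕ)) =
          Function.update (fun i => (y i : ℕ)) j (a : ℕ) from h1]
    _ = ((a : ℕ) + ∑ i ∈ Finset.univ \ {j}, (y i : ℕ)) + (y j : ℕ) := by
        rw [Finset.sum_update_of_mem (Finset.mem_univ j)]
    _ = (∑ i ∈ Finset.univ \ {j}, (y i : ℕ) + (y j : ℕ)) + (a : ℕ) := by ring
    _ = (∑ i, (y i : ℕ)) + (a : ℕ) := by
        rw [← Finset.sum_eq_sum_sdiff_singleton_add (Finset.mem_univ j)]

/-- Counting in a cylinder: filtering by a residue condition on an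
affine weight scales the cardinality by `t/M`. -/
lemma cylinder_count {n m : ℕ} (hm : 0 < m) (j : Fin n)
    (T : Finset (Fin n → Fin m))
    (hT : ∀ y ∈ T, ∀ a : Fin m, Function.update y j a ∈ T)
    (M t : ℕ) (hMm : M ∣ m) (ht : t ≤ M) (φ : (Fin n → Fin m) → ℕ)
    (hφ : ∀ y a, φ (Function.update y j a) + (y j : ℕ) = φ y + (a : ℕ)) :
    (T.filter fun y => φ y % M < t).card * M = T.card * t := by
  classical
  set f : (Fin n → Fin m) → (Fin n → Fin m) :=
    fun y => Function.update y j ⟨((y j : ℕ) + 1) % m, Nat.mod_lt _ hm⟩ with hf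
  set g : (Fin n → Fin m) → (Fin n → Fin m) :=
    fun y => Function.update y j ⟨((y j : ℕ) + (m - 1)) % m, Nat.mod_lt _ hm⟩ with hg
  have hgf : ∀ y, g (f y) = y := by
    intro y
    simp only [hf, hg, Function.update_self, Function.update_idem]
    have hv : (((y j : ℕ) + 1) % m + (m - 1)) % m = (y j : ℕ) := by
      rw [Nat.mod_add_mod, show (y j : ℕ) + 1 + (m - 1) = (y j : ℕ) + m by omega,
        Nat.add_mod_right, Nat.mod_eq_of_lt (y j).is_lt]
    have : (⟨(((y j : ℕ) + 1) % m + (m - 1)) % m, Nat.mod_lt _ hm⟩ : Fin m) = y j :=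
      Fin.ext hv
    rw [this, Function.update_eq_self]
  have hfg : ∀ y, f (g y) = y := by
    intro y
    simp only [hf, hg, Function.update_self, Function.update_idem]
    have hv : (((y j : ℕ) + (m - 1)) % m + 1) % m = (y j : ℕ) := by
      rw [Nat.mod_add_mod, show (y j : ℕ) + (m - 1) + 1 = (y j : ℕ) + m by omega,
        Nat.add_mod_right, Nat.mod_eq_of_lt (y j).is_lt]
    have : (⟨(((y j : ℕ) + (m - 1)) % m + 1) % m, Nat.mod_lt _ hm⟩ : Fin m) = y j :=
      Fin.ext hv
    rw [this, Function.update_eq_self]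
  apply master M t ht T f g φ
  · intro y hy; exact hT y hy _
  · intro y hy; exact hT y hy _
  · intro y _; exact hgf y
  · intro y _; exact hfg y
  · intro y _
    have h1 : φ (f y) + (y j : ℕ) = φ y + (((y j : ℕ) + 1) % m) := hφ y _
    have h2 : ((y j : ℕ) + 1) % m ≡ (y j : ℕ) + 1 [MOD M] :=
      (Nat.mod_modEq ((y j : ℕ) + 1) m).of_dvd hMm
    have h3 : φ (f y) + (y j : ℕ) ≡ (φ y + 1) + (y j : ℕ) [MOD M] := by
      calc φ (f y) + (y j : ℕ) = φ y + (((y j : ℕ) + 1) % m) := h1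
        _ ≡ φ y + ((y j : ℕ) + 1) [MOD M] := (Nat.ModEq.refl _).add h2
        _ = (φ y + 1) + (y j : ℕ) := by ring
    exact Nat.ModEq.add_right_cancel' _ h3

/-- In the toy gadget setting: (1) for every `k ≤ K/2` one has
`K·|T_k| = (K−k)·m^n`; (2) for every `k ∈ [K/2]` one has `K·|S̃_k| = m^n`. -/
theorem stmt_1 (n m K W : ℕ) (hn : 0 < n) (hm : 0 < m) (hW : 0 < W)
    (hK : 2 ≤ K) (hKeven : Even K)
    (hdiv : ∀ s < K / 2, (K - s) ∣ W ∧ (K - s) ∣ m ∧ W ∣ m / (K - s))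
    (J : ℕ → Fin n) (hJ : ∀ s < K / 2, ∀ t < K / 2, s ≠ t → J s ≠ J t) :
    (∀ k ≤ K / 2, K * (Tset n m K J k : Set (Fin n → Fin m)).ncard = (K - k) * m ^ n) ∧
    (∀ k < K / 2, K * (Sset n m K W J k : Set (Fin n → Fin m)).ncard = m ^ n) := by
  classical
  have Tfin : ∀ k, (Tset n m K J k).Finite := fun _ => Set.toFinite _
  have memT : ∀ k (y : Fin n → Fin m), y ∈ (Tfin k).toFinset ↔
      ∀ s < k, (y (J s) : ℕ) < m - m / (K - s) := by
    intro k y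
    rw [Set.Finite.mem_toFinset]
    exact Iff.rfl
  have ncT : ∀ k, (Tset n m K J k).ncard = (Tfin k).toFinset.card := fun k =>
    Set.ncard_eq_toFinset_card _ (Tfin k)
  have hcyl : ∀ k < K / 2, ∀ y ∈ (Tfin k).toFinset, ∀ a : Fin m,
      Function.update y (J k) a ∈ (Tfin k).toFinset := by
    intro k hk y hy a
    rw [memT] at hy ⊢
    intro s hs
    have hne : J s ≠ J k := hJ s (by omega) k hk (by omega)
    rw [Function.update_of_ne hne]
    exact hy s hs
  have part1 : ∀ k ≤ K / 2, K * (Tset n m K J k).ncard = (K - k) * m ^ n := by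
    intro k
    induction k with
    | zero =>
      intro _
      have h0 : Tset n m K J 0 = Set.univ := by
        ext y; simp [Tset]
      rw [h0, Set.ncard_univ, Nat.card_eq_fintype_card, Fintype.card_fun,
        Fintype.card_fin, Fintype.card_fin, Nat.sub_zero]
    | succ k ih =>
      intro hk1
      have hk : k < K / 2 := by omega
      have hkK : k < K := by omega
      have ihk := ih (by omega)
      rw [ncT k] at ihk
      have hTsucc : (Tfin (k + 1)).toFinset
          = (Tfin k).toFinset.filter (fun y => (y (J k) : ℕ) % m < m - m / (K - k)) := by
        ext y
        simp only [Finset.mem_filter, Set.Finite.mem_toFinset, Tset, Set.mem_setOf_eq,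
          Nat.mod_eq_of_lt (y (J k)).is_lt]
        constructor
        · intro h
          exact ⟨fun s hs => h s (by omega), h k (by omega)⟩
        · rintro ⟨h1, h2⟩ s hs
          rcases Nat.lt_succ_iff_lt_or_eq.mp hs with h | h
          · exact h1 s h
          · subst h; exact h2
      have hcount : ((Tfin k).toFinset.filter
            (fun y => (y (J k) : ℕ) % m < m - m / (K - k))).card * m
          = (Tfin k).toFinset.card * (m - m / (K - k)) := by
        refine cylinder_count hm (J k) _ (hcyl k hk) m (m - m / (K - k)) dvd_rfl
          (Nat.sub_le _ _) (fun y => (y (J k) : ℕ)) ?_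
        intro y a
        simp only [Function.update_self]
        omega
      have hdvdm : (K - k) ∣ m := (hdiv k hk).2.1
      obtain ⟨d, hDd⟩ : ∃ d, K - k = d + 1 := ⟨K - (k + 1), by clear hcount; omega⟩
      have hgoal : K - (k + 1) = d := by clear hcount; omega
      rw [ncT (k + 1), hTsucc, hgoal]
      have hme : m / (K - k) * (d + 1) = m := by
        rw [← hDd]; exact Nat.div_mul_cancel hdvdm
      have hc : m - m / (K - k) = m / (K - k) * d := by
        have h2 : m / (K - k) * d + m / (K - k) = m := by
          calc m / (K - k) * d + m / (K - k) = m / (K - k) * (d + 1) := by ring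
            _ = m := hme
        clear hcount hme
        omega
      rw [hDd] at ihk
      have hmain : m * (K * ((Tfin k).toFinset.filter
          (fun y => (y (J k) : ℕ) % m < m - m / (K - k))).card) = m * (d * m ^ n) := by
        calc m * (K * ((Tfin k).toFinset.filter
              (fun y => (y (J k) : ℕ) % m < m - m / (K - k))).card)
            = K * (((Tfin k).toFinset.filter
              (fun y => (y (J k) : ℕ) % m < m - m / (K - k))).card * m) := by ring
          _ = K * ((Tfin k).toFinset.card * (m - m / (K - k))) := by rw [hcount]
          _ = (K * (Tfin k).toFinset.card) * (m - m / (K - k)) := by ring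
          _ = ((d + 1) * m ^ n) * (m / (K - k) * d) := by rw [ihk, hc]
          _ = (m / (K - k) * (d + 1)) * (d * m ^ n) := by ring
          _ = m * (d * m ^ n) := by rw [hme]
      exact Nat.eq_of_mul_eq_mul_left hm hmain
  refine ⟨part1, ?_⟩
  intro k hk
  have hKk : 0 < K - k := by omega
  have hdvdW : (K - k) ∣ W := (hdiv k hk).1
  have hdvdm : (K - k) ∣ m := (hdiv k hk).2.1
  have hWm : W ∣ m := dvd_trans (hdiv k hk).2.2 (Nat.div_dvd_of_dvd hdvdm)
  have htW : W / (K - k) * (K - k) = W := Nat.div_mul_cancel hdvdW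
  have ht0 : 0 < W / (K - k) :=
    Nat.div_pos (Nat.le_of_dvd hW hdvdW) hKk
  have hSfin : (Sset n m K W J k).ncard
      = ((Tfin k).toFinset.filter (fun x => wt x % W < W / (K - k))).card := by
    rw [Set.ncard_eq_toFinset_card _ (Set.toFinite _)]
    congr 1
    ext x
    simp only [Finset.mem_filter, Set.Finite.mem_toFinset, Sset, Set.mem_setOf_eq]
  have hcount : ((Tfin k).toFinset.filter (fun x => wt x % W < W / (K - k))).card * W
      = (Tfin k).toFinset.card * (W / (K - k)) :=
    cylinder_count hm (J k) _ (hcyl k hk) W (W / (K - k)) hWm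
      (Nat.div_le_self _ _) wt (fun y a => wt_update y (J k) a)
  have hp1 := part1 k (le_of_lt hk)
  rw [ncT k] at hp1
  rw [hSfin]
  set s := ((Tfin k).toFinset.filter (fun x => wt x % W < W / (K - k))).card with hs
  set b := (Tfin k).toFinset.card with hb
  have h1 : W / (K - k) * ((K - k) * s) = W / (K - k) * b := by
    calc W / (K - k) * ((K - k) * s) = s * (W / (K - k) * (K - k)) := by ring
      _ = s * W := by rw [htW]
      _ = b * (W / (K - k)) := hcount
      _ = W / (K - k) * b := by ring
  have h2 : (K - k) * s = b := Nat.eq_of_mul_eq_mul_left ht0 h1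
  have h3 : (K - k) * (K * s) = (K - k) * m ^ n := by
    calc (K - k) * (K * s) = K * ((K - k) * s) := by ring
      _ = K * b := by rw [h2]
      _ = (K - k) * m ^ n := hp1
  exact Nat.eq_of_mul_eq_mul_left hKk h3
end

section
/- In the toy gadget setting, let k ∈ [K/2] and let j ∈ [n] ∖ {J_0,…,J_{k−1}}. Then for every y ∈ T_k: (1) |line_j(y)| = m and line_j(y) ⊆ T_k; (2) (K−k)·|line_j(y) ∖ T_k^j| = m; (3) (K−k)·|line_j(y) ∩ S̃_k| = m; (4) (K−k)²·|line_j(y) ∩ S̃_k^j| = (K−k−1)·m. -/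

lemma filter_mod_range_eq (W L c : ℕ) (hW : 0 < W) (hL : L ≤ W) :
    ((Finset.range W).filter (fun t => (t + c) % W < L)).card = L := by
  classical
  set f : ℕ → ℕ := fun t => (t + c) % W with hf
  have hinj : Set.InjOn f (Finset.range W) := by
    intro a ha b hb hab
    simp only [Finset.coe_range, Set.mem_Iio] at ha hb
    have h1 : a % W = b % W := Nat.ModEq.add_right_cancel' c hab
    rwa [Nat.mod_eq_of_lt ha, Nat.mod_eq_of_lt hb] at h1
  have himg : (Finset.range W).image f = Finset.range W := by
    apply Finset.eq_of_subset_of_card_le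
    · intro x hx
      simp only [Finset.mem_image, Finset.mem_range] at hx ⊢
      obtain ⟨t, _, rfl⟩ := hx
      exact Nat.mod_lt _ hW
    · rw [Finset.card_image_of_injOn hinj, Finset.card_range]
  have h2 : ((Finset.range W).filter (fun t => f t < L)).card
      = (((Finset.range W).filter (fun t => f t < L)).image f).card :=
    (Finset.card_image_of_injOn (hinj.mono (by exact_mod_cast Finset.filter_subset _ _))).symm
  have h3 : ((Finset.range W).filter (fun t => f t < L)).image f
      = ((Finset.range W).image f).filter (fun r => r < L) :=
    (Finset.filter_image (f := f) (s := Finset.range W) (p := fun r => r < L)).symm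
  rw [h2, h3, himg]
  have h4 : (Finset.range W).filter (fun r => r < L) = Finset.range L := by
    ext t; simp only [Finset.mem_filter, Finset.mem_range]; omega
  rw [h4, Finset.card_range]

lemma count_mod (W L c : ℕ) (hW : 0 < W) (hL : L ≤ W) (d : ℕ) :
    ((Finset.range (W * d)).filter (fun t => (t + c) % W < L)).card = d * L := by
  classical
  induction d with
  | zero => simp
  | succ d ih =>
    have hsplit : Finset.range (W * (d + 1)) = Finset.range (W * d) ∪
        (Finset.range W).map (addLeftEmbedding (W * d)) := by
      rw [Nat.mul_succ, Finset.range_add]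
    rw [hsplit, Finset.filter_union, Finset.card_union_of_disjoint, ih]
    · have h5 : ((Finset.range W).map (addLeftEmbedding (W * d))).filter
          (fun t => (t + c) % W < L)
          = ((Finset.range W).filter (fun t => (W * d + t + c) % W < L)).map
            (addLeftEmbedding (W * d)) := by
        rw [Finset.filter_map]; rfl
      rw [h5, Finset.card_map]
      have h6 : (Finset.range W).filter (fun t => (W * d + t + c) % W < L)
          = (Finset.range W).filter (fun t => (t + c) % W < L) := by
        apply Finset.filter_congr
        intro t _
        rw [Nat.add_assoc, Nat.add_comm (W * d), Nat.add_mul_mod_self_left]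
      rw [h6, filter_mod_range_eq W L c hW hL]
      ring
    · apply Finset.disjoint_filter_filter
      rw [Finset.disjoint_left]
      intro a ha hb
      simp only [Finset.mem_range] at ha
      simp only [Finset.mem_map, Finset.mem_range, addLeftEmbedding_apply] at hb
      omega

/-- In the toy gadget setting, for `k ∈ [K/2]` and
`j ∈ [n] ∖ {J_0,…,J_{k−1}}`, for every `y ∈ T_k`:
(1) `|line_j(y)| = m` and `line_j(y) ⊆ T_k`;
(2) `(K−k)·|line_j(y) ∖ T_k^j| = m`;
(3) `(K−k)·|line_j(y) ∩ S̃_k| = m`;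
(4) `(K−k)²·|line_j(y) ∩ S̃_k^j| = (K−k−1)·m`. -/
theorem stmt_2 (n m K W : ℕ) (hn : 0 < n) (hm : 0 < m) (hW : 0 < W)
    (hK : 2 ≤ K) (hKeven : Even K)
    (hdiv : ∀ s < K / 2, (K - s) ∣ W ∧ (K - s) ∣ m ∧ W ∣ m / (K - s))
    (J : ℕ → Fin n) (hJ : ∀ s < K / 2, ∀ t < K / 2, s ≠ t → J s ≠ J t)
    (k : ℕ) (hk : k < K / 2) (j : Fin n) (hj : ∀ s < k, J s ≠ j)
    (y : Fin n → Fin m) (hy : y ∈ Tset n m K J k) :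
    ((lineSet j y).ncard = m ∧ lineSet j y ⊆ Tset n m K J k) ∧
    (K - k) * (lineSet j y \ Tj n m K J k j).ncard = m ∧
    (K - k) * (lineSet j y ∩ Sset n m K W J k).ncard = m ∧
    (K - k) ^ 2 * (lineSet j y ∩ Sj n m K W J k j).ncard = (K - k - 1) * m := by
  classical
  obtain ⟨hqW, hqm, hWm'⟩ := hdiv k hk
  set q := K - k with hqdef
  have hkK : k < K := lt_of_lt_of_le hk (Nat.div_le_self K 2)
  have hq : 0 < q := by omega
  have hWm : W ∣ m := hWm'.trans (Nat.div_dvd_of_dvd hqm)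
  have hdm : m / q ≤ m := Nat.div_le_self m q
  set B := m - m / q with hB
  have hBm : B ≤ m := Nat.sub_le _ _
  have hWB : W ∣ B := Nat.dvd_sub hWm hWm'
  set L := W / q with hL
  have hLW : L ≤ W := Nat.div_le_self _ _
  set c := ∑ i ∈ Finset.univ.erase j, (y i : ℕ) with hc
  set g : Fin m → (Fin n → Fin m) := fun t => Function.update y j t with hgdef
  have hgj : ∀ t, g t j = t := fun t => Function.update_self j t y
  have hgi : ∀ t, ∀ i, i ≠ j → g t i = y i := fun t i hij => Function.update_of_ne hij t y
  have hg : Function.Injective g := by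
    intro a b h
    have := congrFun h j
    rwa [hgj, hgj] at this
  -- the line is the range of g
  have hline : lineSet j y = Set.range g := by
    ext x
    constructor
    · intro hx
      refine ⟨x j, funext fun i => ?_⟩
      by_cases hij : i = j
      · subst hij; rw [hgj]
      · rw [hgi _ _ hij, hx i hij]
    · rintro ⟨t, rfl⟩
      intro i hij
      exact hgi t i hij
  -- weight along the line
  have hwt : ∀ t : Fin m, wt (g t) = (t : ℕ) + c := by
    intro t
    unfold wt
    rw [← Finset.add_sum_erase _ _ (Finset.mem_univ j), hgj]
    congr 1
    apply Finset.sum_congr rfl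
    intro i hi
    rw [hgi t i (Finset.mem_erase.1 hi).1]
  -- the line lies in T_k
  have hT : ∀ t : Fin m, g t ∈ Tset n m K J k := by
    intro t s hs
    rw [hgi t (J s) (hj s hs)]
    exact hy s hs
  have hTj : ∀ t : Fin m, g t ∈ Tj n m K J k j ↔ (t : ℕ) < B := by
    intro t
    constructor
    · intro h; have := h.2; rwa [hgj] at this
    · intro h; exact ⟨hT t, by rwa [hgj]⟩
  have hS : ∀ t : Fin m, g t ∈ Sset n m K W J k ↔ ((t : ℕ) + c) % W < L := by
    intro t
    constructor
    · intro h; have := h.2; rwa [hwt] at this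
    · intro h; exact ⟨hT t, by rwa [hwt]⟩
  have hSj : ∀ t : Fin m, g t ∈ Sj n m K W J k j ↔
      ((t : ℕ) < B ∧ ((t : ℕ) + c) % W < L) := by
    intro t
    constructor
    · intro h
      refine ⟨?_, (hS t).1 h.1⟩
      have := h.2; rwa [hgj] at this
    · intro h
      exact ⟨(hS t).2 h.2, by rw [hgj]; exact h.1⟩
  -- generic counting reduction
  have key : ∀ A : Set (Fin n → Fin m),
      (Set.range g ∩ A).ncard = (Finset.univ.filter (fun t => g t ∈ A)).card := by
    intro A
    have h1 : Set.range g ∩ A = g '' {t | g t ∈ A} := by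
      ext x
      constructor
      · rintro ⟨⟨t, rfl⟩, hx⟩; exact ⟨t, hx, rfl⟩
      · rintro ⟨t, ht, rfl⟩; exact ⟨⟨t, rfl⟩, ht⟩
    rw [h1, Set.ncard_image_of_injective _ hg]
    have h2 : {t | g t ∈ A} = ↑(Finset.univ.filter (fun t => g t ∈ A)) := by
      ext t; simp
    rw [h2, Set.ncard_coe_finset]
  have key2 : ∀ (A : Set (Fin n → Fin m)) (P : ℕ → Prop) (_ : DecidablePred P),
      (∀ t : Fin m, g t ∈ A ↔ P (t : ℕ)) →
      (Set.range g ∩ A).ncard = ((Finset.range m).filter P).card := by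
    intro A P inst hAP
    rw [key A, Finset.card_filter, Finset.card_filter,
      ← Fin.sum_univ_eq_sum_range (fun i => if P i then 1 else 0) m]
    apply Finset.sum_congr rfl
    intro t _
    by_cases h : P (t : ℕ) <;> simp [hAP t, h]
  -- arithmetic facts
  have hqL : q * L = W := Nat.mul_div_cancel' hqW
  have hmW : m = W * (m / W) := (Nat.mul_div_cancel' hWm).symm
  have hBW : B = W * (B / W) := (Nat.mul_div_cancel' hWB).symm
  have hqmq : q * (m / q) = m := Nat.mul_div_cancel' hqm
  -- Part 1
  have part1a : (lineSet j y).ncard = m := by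
    rw [hline, ← Set.image_univ, Set.ncard_image_of_injective _ hg, Set.ncard_univ,
      Nat.card_eq_fintype_card, Fintype.card_fin]
  have part1b : lineSet j y ⊆ Tset n m K J k := by
    rw [hline]
    rintro x ⟨t, rfl⟩
    exact hT t
  -- Part 2
  have part2 : q * (lineSet j y \ Tj n m K J k j).ncard = m := by
    rw [hline, Set.diff_eq,
      key2 ((Tj n m K J k j)ᶜ) (fun v => ¬ (v < B)) (by infer_instance)
        (fun t => by simp only [Set.mem_compl_iff, hTj t])]
    have h2 : (Finset.range m).filter (fun v => ¬ (v < B)) = Finset.Ico B m := by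
      ext t
      simp only [Finset.mem_filter, Finset.mem_range, Finset.mem_Ico]
      omega
    rw [h2, Nat.card_Ico]
    have : m - B = m / q := by omega
    rw [this, hqmq]
  -- Part 3
  have part3 : q * (lineSet j y ∩ Sset n m K W J k).ncard = m := by
    rw [hline,
      key2 (Sset n m K W J k) (fun v => (v + c) % W < L) (by infer_instance)
        (fun t => hS t)]
    rw [show Finset.range m = Finset.range (W * (m / W)) by rw [← hmW]]
    rw [count_mod W L c hW hLW (m / W)]
    calc q * (m / W * L) = m / W * (q * L) := by ring
      _ = m / W * W := by rw [hqL]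
      _ = m := Nat.div_mul_cancel hWm
  -- Part 4
  have part4 : q ^ 2 * (lineSet j y ∩ Sj n m K W J k j).ncard = (q - 1) * m := by
    rw [hline,
      key2 (Sj n m K W J k j) (fun v => v < B ∧ (v + c) % W < L) (by infer_instance)
        (fun t => hSj t)]
    have h2 : (Finset.range m).filter (fun v => v < B ∧ (v + c) % W < L)
        = (Finset.range B).filter (fun v => (v + c) % W < L) := by
      ext t
      simp only [Finset.mem_filter, Finset.mem_range]
      exact ⟨fun h => ⟨h.2.1, h.2.2⟩, fun h => ⟨lt_of_lt_of_le h.1 hBm, h⟩⟩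
    rw [h2, show Finset.range B = Finset.range (W * (B / W)) by rw [← hBW]]
    rw [count_mod W L c hW hLW (B / W)]
    have hBval : B = (q - 1) * (m / q) := by
      have h3 : (q - 1) * (m / q) = q * (m / q) - 1 * (m / q) := Nat.sub_mul q 1 (m / q)
      rw [h3, hqmq, one_mul, hB]
    calc q ^ 2 * (B / W * L) = (B / W * (q * L)) * q := by ring
      _ = (B / W * W) * q := by rw [hqL]
      _ = B * q := by rw [Nat.div_mul_cancel hWB]
      _ = ((q - 1) * (m / q)) * q := by rw [hBval]
      _ = (q - 1) * (q * (m / q)) := by ring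
      _ = (q - 1) * m := by rw [hqmq]
  exact ⟨⟨part1a, part1b⟩, part2, part3, part4⟩
end

section
/- Let n, m, W, λ be positive integers with λ ≥ 2, λ ∣ W and W ∣ m, and let r ∈ [n]. Define ρ : [m]^n → [m]^n as follows: given x ∈ [m]^n, write x_r = a·W + b·(W/λ) + c with a ∈ [m/W], b ∈ [λ], c ∈ [W/λ], and let ρ(x) agree with x on all coordinates except r, where (ρ(x))_r = a·(W/λ) + c. Then for every U ⊆ [m]^n that does not depend on coordinate r, the map ρ maps {x ∈ U : wt(x) mod W < W/λ} bijectively onto {x ∈ U : x_r < m/λ}. -/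
/-- The `(λ, r)`-densifying map `ρ`: writing `x_r = a·W + b·(W/λ) + c` with
`a ∈ [m/W]`, `b ∈ [λ]`, `c ∈ [W/λ]`, the map `ρ` replaces the `r`-th coordinate of `x`
by `a·(W/λ) + c` and leaves all other coordinates unchanged.  (Under the divisibility
hypotheses of the theorem below the value `a·(W/λ) + c` is `< m`, so the reduction
mod `m` used to produce an element of `Fin m` does not change it.) -/
def densify (n m W lam : ℕ) (hm : 0 < m) (r : Fin n) (x : Fin n → Fin m) :
    Fin n → Fin m :=
  Function.update x r
    ⟨((x r : ℕ) / W * (W / lam) + (x r : ℕ) % (W / lam)) % m, Nat.mod_lt _ hm⟩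

lemma aux_bound {a A c L : ℕ} (ha : a < A) (hc : c < L) : a * L + c < A * L := by
  have h1 : (a + 1) * L ≤ A * L := Nat.mul_le_mul_right L (Nat.succ_le_of_lt ha)
  have h2 : (a + 1) * L = a * L + L := by ring
  omega

lemma aux_decomp (lam L q s : ℕ) (hlam : 0 < lam) (hs : s < L) :
    (q * L + s) % (lam * L) = q % lam * L + s := by
  have hq : q % lam < lam := Nat.mod_lt _ hlam
  have hlt : q % lam * L + s < lam * L := by
    have := aux_bound hq hs
    omega
  have h1 : q * L % (lam * L) = q % lam * L := Nat.mul_mod_mul_right L q lam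
  have h2 : s % (lam * L) = s := Nat.mod_eq_of_lt (by omega)
  rw [Nat.add_mod, h1, h2, Nat.mod_eq_of_lt hlt]

lemma aux_split (L u b : ℕ) : u + b * L = (u / L + b) * L + u % L := by
  conv_lhs => rw [← Nat.div_add_mod u L]
  ring

lemma aux_zero {lam L u b : ℕ} (hlam : 0 < lam) (hL : 0 < L)
    (h : (u + b * L) % (lam * L) < L) : (u / L + b) % lam = 0 := by
  rw [aux_split L u b, aux_decomp lam L _ _ hlam (Nat.mod_lt _ hL)] at h
  by_contra hne
  have h1 : 1 ≤ (u / L + b) % lam := Nat.one_le_iff_ne_zero.mpr hne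
  have h2 : 1 * L ≤ (u / L + b) % lam * L := Nat.mul_le_mul_right L h1
  have h3 : 1 * L = L := one_mul L
  omega

lemma aux_uniq {lam L u b b' : ℕ} (hlam : 0 < lam) (hL : 0 < L) (hb : b < lam) (hb' : b' < lam)
    (h1 : (u + b * L) % (lam * L) < L) (h2 : (u + b' * L) % (lam * L) < L) : b = b' := by
  have e1 := aux_zero hlam hL h1
  have e2 := aux_zero hlam hL h2
  have he : (u / L + b) % lam = (u / L + b') % lam := by rw [e1, e2]
  have hmod : b ≡ b' [MOD lam] := Nat.ModEq.add_left_cancel' (u / L) he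
  rw [Nat.ModEq, Nat.mod_eq_of_lt hb, Nat.mod_eq_of_lt hb'] at hmod
  exact hmod

lemma aux_exists (lam L u : ℕ) (hlam : 0 < lam) (hL : 0 < L) :
    ∃ b < lam, (u + b * L) % (lam * L) = u % L := by
  set p := u / L % lam with hp
  have hplt : p < lam := Nat.mod_lt _ hlam
  refine ⟨(lam - p) % lam, Nat.mod_lt _ hlam, ?_⟩
  rw [aux_split L u _, aux_decomp lam L _ _ hlam (Nat.mod_lt _ hL)]
  have hz : (u / L + (lam - p) % lam) % lam = 0 := by
    rw [Nat.add_mod, ← hp, Nat.mod_mod_of_dvd _ dvd_rfl]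
    rcases Nat.eq_zero_or_pos p with h0 | h0
    · simp [h0]
    · have h1 : (lam - p) % lam = lam - p := Nat.mod_eq_of_lt (by omega)
      rw [h1]
      have h2 : p + (lam - p) = lam := by omega
      rw [h2, Nat.mod_self]
  rw [hz, zero_mul, zero_add]

/-- The `(λ,r)`-densifying map maps
`{x ∈ U : wt(x) mod W < W/λ}` bijectively onto `{x ∈ U : x_r < m/λ}`, for every
`U ⊆ [m]^n` that does not depend on coordinate `r`. -/
theorem stmt_4 (n m W lam : ℕ) (hn : 0 < n) (hm : 0 < m) (hW : 0 < W) (hlam : 2 ≤ lam)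
    (hlW : lam ∣ W) (hWm : W ∣ m) (r : Fin n) (U : Set (Fin n → Fin m))
    (hU : ∀ x ∈ U, ∀ y : Fin m, Function.update x r y ∈ U) :
    Set.BijOn (densify n m W lam hm r)
      {x | x ∈ U ∧ wt x % W < W / lam}
      {x | x ∈ U ∧ (x r : ℕ) < m / lam} := by
  have hlam0 : 0 < lam := by omega
  set L := W / lam with hLdef
  have hWL : lam * L = W := Nat.mul_div_cancel' hlW
  have hLpos : 0 < L := Nat.div_pos (Nat.le_of_dvd hW hlW) hlam0
  have hmW : m / W * W = m := Nat.div_mul_cancel hWm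
  have hmlam : m / lam = m / W * L := by
    have h : m = m / W * L * lam := by rw [mul_assoc, mul_comm L lam, hWL, hmW]
    calc m / lam = m / W * L * lam / lam := by rw [← h]
    _ = m / W * L := Nat.mul_div_cancel _ hlam0
  have hval : ∀ x : Fin n → Fin m,
      (x r : ℕ) / W * L + (x r : ℕ) % L < m / lam := by
    intro x
    have hx : (x r : ℕ) < m := (x r).2
    have ha : (x r : ℕ) / W < m / W := by
      rw [Nat.div_lt_iff_lt_mul hW, hmW]; exact hx
    rw [hmlam]
    exact aux_bound ha (Nat.mod_lt _ hLpos)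
  have hvalm : ∀ x : Fin n → Fin m,
      (x r : ℕ) / W * L + (x r : ℕ) % L < m := by
    intro x
    exact lt_of_lt_of_le (hval x) (Nat.div_le_self m lam)
  have hdr : ∀ x : Fin n → Fin m,
      ((densify n m W lam hm r x) r : ℕ) = (x r : ℕ) / W * L + (x r : ℕ) % L := by
    intro x
    simp only [densify, Function.update_self]
    exact Nat.mod_eq_of_lt (hvalm x)
  have hdj : ∀ (x : Fin n → Fin m) (j : Fin n), j ≠ r →
      densify n m W lam hm r x j = x j := by
    intro x j hj
    simp only [densify]
    exact Function.update_of_ne hj _ x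
  have hwt : ∀ x : Fin n → Fin m,
      wt x = (∑ j ∈ Finset.univ.erase r, (x j : ℕ)) + (x r : ℕ) := by
    intro x
    rw [wt, ← Finset.add_sum_erase _ _ (Finset.mem_univ r)]
    ring
  constructor
  · -- MapsTo
    intro x hx
    refine ⟨hU x hx.1 _, ?_⟩
    rw [hdr x]
    exact hval x
  constructor
  · -- InjOn
    intro x hx y hy hxy
    have hoff : ∀ j : Fin n, j ≠ r → x j = y j := by
      intro j hj
      have := congrFun hxy j
      rwa [hdj x j hj, hdj y j hj] at this
    have hv : (x r : ℕ) / W * L + (x r : ℕ) % L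
        = (y r : ℕ) / W * L + (y r : ℕ) % L := by
      rw [← hdr x, ← hdr y, hxy]
    have hax : (x r : ℕ) / W = (y r : ℕ) / W := by
      have h1 : ((x r : ℕ) / W * L + (x r : ℕ) % L) / L = (x r : ℕ) / W := by
        rw [mul_comm, Nat.mul_add_div hLpos, Nat.div_eq_of_lt (Nat.mod_lt _ hLpos), add_zero]
      have h2 : ((y r : ℕ) / W * L + (y r : ℕ) % L) / L = (y r : ℕ) / W := by
        rw [mul_comm, Nat.mul_add_div hLpos, Nat.div_eq_of_lt (Nat.mod_lt _ hLpos), add_zero]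
      rw [← h1, ← h2, hv]
    have hcx : (x r : ℕ) % L = (y r : ℕ) % L := by
      rw [hax] at hv
      omega
    set bx := (x r : ℕ) % W / L with hbx
    set by' := (y r : ℕ) % W / L with hby
    have hbxl : bx < lam := by
      rw [hbx, Nat.div_lt_iff_lt_mul hLpos, hWL]
      exact Nat.mod_lt _ hW
    have hbyl : by' < lam := by
      rw [hby, Nat.div_lt_iff_lt_mul hLpos, hWL]
      exact Nat.mod_lt _ hW
    have hLdW : L ∣ W := ⟨lam, by rw [mul_comm]; exact hWL.symm⟩
    have hxdec : (x r : ℕ) = (x r : ℕ) / W * W + bx * L + (x r : ℕ) % L := by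
      have h1 := Nat.div_add_mod ((x r : ℕ)) W
      have h1' : W * ((x r : ℕ) / W) = (x r : ℕ) / W * W := mul_comm _ _
      have h2 := Nat.div_add_mod ((x r : ℕ) % W) L
      have h2' : L * ((x r : ℕ) % W / L) = bx * L := by rw [hbx]; exact mul_comm _ _
      have h3 : (x r : ℕ) % W % L = (x r : ℕ) % L := Nat.mod_mod_of_dvd _ hLdW
      omega
    have hydec : (y r : ℕ) = (y r : ℕ) / W * W + by' * L + (y r : ℕ) % L := by
      have h1 := Nat.div_add_mod ((y r : ℕ)) W
      have h1' : W * ((y r : ℕ) / W) = (y r : ℕ) / W * W := mul_comm _ _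
      have h2 := Nat.div_add_mod ((y r : ℕ) % W) L
      have h2' : L * ((y r : ℕ) % W / L) = by' * L := by rw [hby]; exact mul_comm _ _
      have h3 : (y r : ℕ) % W % L = (y r : ℕ) % L := Nat.mod_mod_of_dvd _ hLdW
      omega
    set S := ∑ j ∈ Finset.univ.erase r, ((x j : Fin m) : ℕ) with hS
    have hSy : (∑ j ∈ Finset.univ.erase r, ((y j : Fin m) : ℕ)) = S := by
      rw [hS]
      exact Finset.sum_congr rfl fun j hj => by rw [hoff j (Finset.ne_of_mem_erase hj)]
    have hwx : (S + (x r : ℕ) % L + bx * L) % (lam * L) < L := by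
      have hthis := hx.2
      rw [hwt x, ← hS] at hthis
      have harr : S + (x r : ℕ) = (S + (x r : ℕ) % L + bx * L) + (x r : ℕ) / W * W := by
        omega
      rw [harr, Nat.add_mul_mod_self_right] at hthis
      rw [hWL]
      exact hthis
    have hwy : (S + (x r : ℕ) % L + by' * L) % (lam * L) < L := by
      have hthis := hy.2
      rw [hwt y, hSy] at hthis
      have harr : S + (y r : ℕ) = (S + (x r : ℕ) % L + by' * L) + (y r : ℕ) / W * W := by
        omega
      rw [harr, Nat.add_mul_mod_self_right] at hthis
      rw [hWL]
      exact hthis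
    have hbeq : bx = by' := aux_uniq hlam0 hLpos hbxl hbyl hwx hwy
    have hbridge1 : (x r : ℕ) / W * W = (y r : ℕ) / W * W := by rw [hax]
    have hbridge2 : bx * L = by' * L := by rw [hbeq]
    have hxyr : x r = y r := Fin.ext (by omega)
    funext j
    by_cases hj : j = r
    · rw [hj]; exact hxyr
    · exact hoff j hj
  · -- SurjOn
    intro y hy
    obtain ⟨hyU, hyr⟩ := hy
    set a := (y r : ℕ) / L with ha
    set c := (y r : ℕ) % L with hc
    have haA : a < m / W := by
      rw [ha, Nat.div_lt_iff_lt_mul hLpos]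
      rw [hmlam] at hyr
      exact hyr
    have hcL : c < L := Nat.mod_lt _ hLpos
    set S := ∑ j ∈ Finset.univ.erase r, ((y j : Fin m) : ℕ) with hS
    obtain ⟨b, hblam, hbprop⟩ := aux_exists lam L (S + c) hlam0 hLpos
    set xr := a * W + b * L + c with hxr
    have hxrm : xr < m := by
      have h1 : b * L + c < W := by
        rw [← hWL]; exact aux_bound hblam hcL
      have h2 : (a + 1) * W ≤ m / W * W := Nat.mul_le_mul_right W (Nat.succ_le_of_lt haA)
      have h3 : (a + 1) * W = a * W + W := by ring
      rw [hmW] at h2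
      omega
    set x := Function.update y r (⟨xr, hxrm⟩ : Fin m) with hx
    have hxj : ∀ j : Fin n, j ≠ r → x j = y j := fun j hj => Function.update_of_ne hj _ y
    have hxrval : (x r : ℕ) = xr := by rw [hx, Function.update_self]
    refine ⟨x, ⟨hU y hyU _, ?_⟩, ?_⟩
    · -- weight condition
      show wt x % W < L
      rw [hwt x]
      have hSx : (∑ j ∈ Finset.univ.erase r, ((x j : Fin m) : ℕ)) = S := by
        rw [hS]
        exact Finset.sum_congr rfl fun j hj => by rw [hxj j (Finset.ne_of_mem_erase hj)]
      rw [hSx, hxrval]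
      have harr : S + xr = (S + c + b * L) + a * W := by rw [hxr]; ring
      rw [harr, Nat.add_mul_mod_self_right, ← hWL, hbprop]
      exact Nat.mod_lt _ hLpos
    · -- densify x = y
      funext j
      by_cases hj : j = r
      · rw [hj]
        apply Fin.ext
        rw [hdr x, hxrval]
        have hdiv : xr / W = a := by
          have h1 : b * L + c < W := by rw [← hWL]; exact aux_bound hblam hcL
          have harr : xr = b * L + c + W * a := by rw [hxr]; ring
          rw [harr, Nat.add_mul_div_left _ _ hW, Nat.div_eq_of_lt h1, zero_add]
        have hmod : xr % L = c := by
          have harr : xr = L * (a * lam + b) + c := by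
            rw [hxr, ← hWL]; ring
          rw [harr, Nat.mul_add_mod, Nat.mod_eq_of_lt hcL]
        rw [hdiv, hmod]
        have hyd : a * L + c = (y r : ℕ) := by
          have h1 := Nat.div_add_mod ((y r : ℕ)) L
          have h1' : L * ((y r : ℕ) / L) = a * L := by rw [ha]; exact mul_comm _ _
          omega
        rw [hyd]
      · rw [hdj x j hj]
        exact hxj j hj
end

section
/- In the toy gadget setting, let k ∈ [K/2] and let i, j ∈ [n] with i ≠ j. Then for all x, y ∈ [m]^n, the two sets of pairs (line_i(x) ∩ S̃_k^i) × (line_i(x) ∩ (T_k ∖ T_k^i)) and (line_j(y) ∩ S̃_k^j) × (line_j(y) ∩ (T_k ∖ T_k^j)) are disjoint subsets of [m]^n × [m]^n. -/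
/-- In the toy gadget setting, for `k ∈ [K/2]` and distinct `i, j ∈ [n]`,
for all `x, y ∈ [m]^n`, the complete bipartite edge sets
`(line_i(x) ∩ S̃_k^i) × (line_i(x) ∩ (T_k ∖ T_k^i))` and
`(line_j(y) ∩ S̃_k^j) × (line_j(y) ∩ (T_k ∖ T_k^j))` are disjoint. -/
theorem stmt_5 (n m K W : ℕ) (hn : 0 < n) (hm : 0 < m) (hW : 0 < W)
    (hK : 2 ≤ K) (hKeven : Even K)
    (hdiv : ∀ s < K / 2, (K - s) ∣ W ∧ (K - s) ∣ m ∧ W ∣ m / (K - s))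
    (J : ℕ → Fin n) (hJ : ∀ s < K / 2, ∀ t < K / 2, s ≠ t → J s ≠ J t)
    (k : ℕ) (hk : k < K / 2) (i j : Fin n) (hij : i ≠ j) (x y : Fin n → Fin m) :
    Disjoint
      (((lineSet i x ∩ Sj n m K W J k i) ×ˢ
          (lineSet i x ∩ (Tset n m K J k \ Tj n m K J k i))) :
        Set ((Fin n → Fin m) × (Fin n → Fin m)))
      ((lineSet j y ∩ Sj n m K W J k j) ×ˢ
        (lineSet j y ∩ (Tset n m K J k \ Tj n m K J k j))) := by
  rw [Set.disjoint_left]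
  rintro ⟨u, v⟩ ⟨⟨hux, hSi⟩, hvx, hvT, hvTi⟩ ⟨⟨huy, hSj⟩, hvy, hvT', hvTj⟩
  have hj : u j = v j := (hux j hij.symm).trans (hvx j hij.symm).symm
  have := hSj.2
  simp only at this
  rw [hj] at this
  exact hvTj ⟨hvT', this⟩
end

section
/- In the toy gadget setting, suppose additionally that B_0,…,B_{K/2−1} are pairwise disjoint subsets of [n] with J_k ∈ B_k for every k ∈ [K/2]. Then for every k ∈ [K/2], every j ∈ B_k, and every pair (u,v) ∈ E_{k,j} such that u ∈ T_* and v ∉ T_*, one has j = J_k. Consequently, every edge of E = ⋃_{k∈[K/2]} ⋃_{j∈B_k} E_{k,j} whose first endpoint lies in T_* and whose second endpoint lies outside T_* belongs to ⋃_{k∈[K/2]} E_{k,J_k}. -/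
/-- In the toy gadget setting, with pairwise disjoint blocks
`B_0,…,B_{K/2−1} ⊆ [n]` such that `J_k ∈ B_k`: every edge `(u,v) ∈ E_{k,j}` with
`j ∈ B_k`, `u ∈ T_*` and `v ∉ T_*` has `j = J_k`; consequently every edge of
`E = ⋃_k ⋃_{j∈B_k} E_{k,j}` whose first endpoint lies in `T_*` and whose second
endpoint lies outside `T_*` belongs to `⋃_k E_{k,J_k}`. -/
theorem stmt_7 (n m K W : ℕ) (hn : 0 < n) (hm : 0 < m) (hW : 0 < W)
    (hK : 2 ≤ K) (hKeven : Even K)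
    (hdiv : ∀ s < K / 2, (K - s) ∣ W ∧ (K - s) ∣ m ∧ W ∣ m / (K - s))
    (J : ℕ → Fin n) (hJ : ∀ s < K / 2, ∀ t < K / 2, s ≠ t → J s ≠ J t)
    (B : ℕ → Finset (Fin n))
    (hBdisj : ∀ k < K / 2, ∀ k' < K / 2, k ≠ k' → Disjoint (B k) (B k'))
    (hJB : ∀ k < K / 2, J k ∈ B k) :
    (∀ k < K / 2, ∀ j ∈ B k, ∀ u v : Fin n → Fin m,
      (u, v) ∈ Eset n m K W J k j → u ∈ Tset n m K J (K / 2) →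
      v ∉ Tset n m K J (K / 2) → j = J k) ∧
    (∀ u v : Fin n → Fin m,
      (∃ k < K / 2, ∃ j ∈ B k, (u, v) ∈ Eset n m K W J k j) →
      u ∈ Tset n m K J (K / 2) → v ∉ Tset n m K J (K / 2) →
      ∃ k < K / 2, (u, v) ∈ Eset n m K W J k (J k)) := by
  have h1 : ∀ k < K / 2, ∀ j ∈ B k, ∀ u v : Fin n → Fin m,
      (u, v) ∈ Eset n m K W J k j → u ∈ Tset n m K J (K / 2) →
      v ∉ Tset n m K J (K / 2) → j = J k := by
    intro k hk j hj u v he hu hv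
    obtain ⟨hSj, ⟨hvT, hvnot⟩, hagree⟩ := he
    simp only [Tset, Set.mem_setOf_eq, not_forall] at hv
    obtain ⟨s, hs, hvs⟩ := hv
    push_neg at hvs
    have hus : (u (J s) : ℕ) < m - m / (K - s) := hu s hs
    have hjJs : j = J s := by
      by_contra hne
      have heq : (u (J s) : ℕ) = (v (J s) : ℕ) :=
        congrArg Fin.val (hagree (J s) (fun h => hne h.symm))
      omega
    have hsk : s = k := by
      by_contra hne
      have hd := hBdisj k hk s hs (fun h => hne h.symm)
      have : j ∈ B s := hjJs ▸ hJB s hs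
      exact (Finset.disjoint_left.mp hd hj) this
    rw [hjJs, hsk]
  refine ⟨h1, ?_⟩
  intro u v ⟨k, hk, j, hj, he⟩ hu hv
  have := h1 k hk j hj u v he hu hv
  exact ⟨k, hk, this ▸ he⟩
end

section
/- There is an absolute constant c > 0 such that for every ε ∈ (0,1) and all positive integers m and w with w = εm/2 and w ∣ m, there exists a family F ⊆ {0,1}^m such that: every u ∈ F has exactly w ones; ⟨u,u'⟩ < εw for all distinct u, u' ∈ F; and |F| ≥ 2^{c·ε²·m}. -/
open Finset in
private def agreeN {w b : ℕ} (g h : Fin w → Fin b) : ℕ :=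
  (Finset.univ.filter fun i => g i = h i).card

open Finset in
private lemma two_pow_agree {w b : ℕ} (g h : Fin w → Fin b) :
    (2:ℕ) ^ agreeN g h = ∏ i, (if g i = h i then 2 else 1) := by
  rw [Finset.prod_ite, Finset.prod_const, Finset.prod_const, one_pow, mul_one, agreeN]

open Finset in
private lemma mgf {w b : ℕ} (g : Fin w → Fin b) :
    ∑ h : Fin w → Fin b, (2:ℕ) ^ agreeN g h = (b+1)^w := by
  simp_rw [two_pow_agree]
  rw [← Fintype.prod_sum (fun i j => if g i = j then 2 else 1)]
  have : ∀ i : Fin w, (∑ j : Fin b, if g i = j then 2 else 1) = b + 1 := by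
    intro i
    have : ∀ j : Fin b, (if g i = j then 2 else 1) = 1 + (if g i = j then 1 else 0) := by
      intro j; split <;> ring
    simp_rw [this, Finset.sum_add_distrib, Finset.sum_ite_eq, Finset.sum_const,
      Finset.card_univ, Fintype.card_fin]
    simp
  rw [Finset.prod_congr rfl (fun i _ => this i), Finset.prod_const, Finset.card_univ,
    Fintype.card_fin]

open Finset in
private lemma agree_comm {w b : ℕ} (g h : Fin w → Fin b) : agreeN g h = agreeN h g := by
  unfold agreeN; congr 1; apply Finset.filter_congr; intro i _; simp [eq_comm]

open Finset in
private lemma agree_self {w b : ℕ} (g : Fin w → Fin b) : agreeN g g = w := by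
  simp [agreeN]

open Finset in
private lemma greedy (w b s : ℕ) (hs : s ≤ w) :
    ∃ F : Finset (Fin w → Fin b),
      (∀ g ∈ F, ∀ h ∈ F, g ≠ h → agreeN g h < s) ∧
      b ^ w * 2 ^ s ≤ F.card * (b+1) ^ w := by
  classical
  set good : Finset (Fin w → Fin b) → Prop :=
    fun F => ∀ g ∈ F, ∀ h ∈ F, g ≠ h → agreeN g h < s with hgood
  have hne : ((Finset.univ : Finset (Finset (Fin w → Fin b))).filter good).Nonempty := by
    refine ⟨∅, ?_⟩
    simp [hgood]
  obtain ⟨F, hF, hmax⟩ := Finset.exists_max_image _ Finset.card hne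
  rw [Finset.mem_filter] at hF
  have hFgood : good F := hF.2
  refine ⟨F, hFgood, ?_⟩
  -- covering property
  have hcover : ∀ h : Fin w → Fin b, ∃ g ∈ F, s ≤ agreeN g h := by
    intro h
    by_cases hh : h ∈ F
    · exact ⟨h, hh, by rw [agree_self]; exact hs⟩
    · by_contra hc
      push_neg at hc
      have : good (insert h F) := by
        intro g₁ h₁ g₂ h₂ hne'
        rcases Finset.mem_insert.1 h₁ with e1 | m1 <;>
          rcases Finset.mem_insert.1 h₂ with e2 | m2
        · exact absurd (e1.trans e2.symm) hne'
        · subst e1; rw [agree_comm]; exact hc g₂ m2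
        · subst e2; exact hc g₁ m1
        · exact hFgood g₁ m1 g₂ m2 hne'
      have hmem : insert h F ∈ (Finset.univ : Finset (Finset (Fin w → Fin b))).filter good :=
        Finset.mem_filter.2 ⟨Finset.mem_univ _, this⟩
      have := hmax _ hmem
      rw [Finset.card_insert_of_notMem hh] at this
      omega
  -- ball bound
  have hball : ∀ g : Fin w → Fin b,
      (Finset.univ.filter fun h => s ≤ agreeN g h).card * 2 ^ s ≤ (b+1) ^ w := by
    intro g
    calc (Finset.univ.filter fun h => s ≤ agreeN g h).card * 2 ^ s
        = ∑ h ∈ Finset.univ.filter fun h => s ≤ agreeN g h, 2 ^ s := by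
          rw [Finset.sum_const, smul_eq_mul]
      _ ≤ ∑ h ∈ Finset.univ.filter fun h => s ≤ agreeN g h, 2 ^ agreeN g h := by
          apply Finset.sum_le_sum
          intro h hh
          exact Nat.pow_le_pow_right (by norm_num) (Finset.mem_filter.1 hh).2
      _ ≤ ∑ h : Fin w → Fin b, 2 ^ agreeN g h :=
          Finset.sum_le_sum_of_subset (Finset.filter_subset _ _)
      _ = (b+1) ^ w := mgf g
  -- covering count
  have hcard : b ^ w ≤ ∑ g ∈ F, (Finset.univ.filter fun h => s ≤ agreeN g h).card := by
    have hsub : (Finset.univ : Finset (Fin w → Fin b)) ⊆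
        F.biUnion fun g => Finset.univ.filter fun h => s ≤ agreeN g h := by
      intro h _
      obtain ⟨g, hg, hgs⟩ := hcover h
      exact Finset.mem_biUnion.2 ⟨g, hg, Finset.mem_filter.2 ⟨Finset.mem_univ _, hgs⟩⟩
    calc b ^ w = (Finset.univ : Finset (Fin w → Fin b)).card := by
          rw [Finset.card_univ, Fintype.card_fun]; simp [Fintype.card_fin]
      _ ≤ (F.biUnion fun g => Finset.univ.filter fun h => s ≤ agreeN g h).card :=
          Finset.card_le_card hsub
      _ ≤ ∑ g ∈ F, (Finset.univ.filter fun h => s ≤ agreeN g h).card :=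
          Finset.card_biUnion_le
  calc b ^ w * 2 ^ s ≤ (∑ g ∈ F, (Finset.univ.filter fun h => s ≤ agreeN g h).card) * 2 ^ s :=
        Nat.mul_le_mul_right _ hcard
    _ = ∑ g ∈ F, (Finset.univ.filter fun h => s ≤ agreeN g h).card * 2 ^ s := by
        rw [Finset.sum_mul]
    _ ≤ ∑ _g ∈ F, (b+1) ^ w := Finset.sum_le_sum fun g _ => hball g
    _ = F.card * (b+1) ^ w := by rw [Finset.sum_const, smul_eq_mul]

private lemma exp_one_le : Real.exp 1 ≤ (2:ℝ) ^ ((3:ℝ)/2) := by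
  have ht : ((2:ℝ) ^ ((3:ℝ)/2)) ^ (2:ℕ) = 8 := by
    rw [← Real.rpow_natCast ((2:ℝ) ^ ((3:ℝ)/2)) 2, ← Real.rpow_mul (by norm_num)]
    norm_num
  have h0 : (0:ℝ) ≤ (2:ℝ) ^ ((3:ℝ)/2) := Real.rpow_nonneg (by norm_num) _
  have he : Real.exp 1 < 2.7182818286 := Real.exp_one_lt_d9
  have hepos : (0:ℝ) < Real.exp 1 := Real.exp_pos 1
  nlinarith [ht, h0, he, hepos]

private lemma real_est (b w s N : ℕ) (hb : 3 ≤ b)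
    (hsw : 2 * (w:ℝ) / (b:ℝ) ≤ (s:ℝ))
    (h : b ^ w * 2 ^ s ≤ N * (b+1) ^ w) :
    (2:ℝ) ^ ((w:ℝ) / (2 * (b:ℝ))) ≤ (N:ℝ) := by
  set B : ℝ := (b:ℝ) with hB
  have hBpos : (0:ℝ) < B := by rw [hB]; exact_mod_cast Nat.lt_of_lt_of_le (by norm_num) hb
  have hBne : B ≠ 0 := ne_of_gt hBpos
  -- exponential estimate: B + 1 ≤ 2^(3/(2B)) * B
  have hkey : B + 1 ≤ (2:ℝ) ^ ((3:ℝ)/(2*B)) * B := by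
    have h1 : 1/B + 1 ≤ Real.exp (1/B) := Real.add_one_le_exp (1/B)
    have h2 : Real.exp (1/B) = (Real.exp 1) ^ ((1:ℝ)/B) := by
      rw [Real.exp_one_rpow]
    have h3 : (Real.exp 1) ^ ((1:ℝ)/B) ≤ ((2:ℝ) ^ ((3:ℝ)/2)) ^ ((1:ℝ)/B) :=
      Real.rpow_le_rpow (le_of_lt (Real.exp_pos 1)) exp_one_le (by positivity)
    have h4 : ((2:ℝ) ^ ((3:ℝ)/2)) ^ ((1:ℝ)/B) = (2:ℝ) ^ ((3:ℝ)/(2*B)) := by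
      rw [← Real.rpow_mul (by norm_num)]
      congr 1
      field_simp
    have h5 : 1/B + 1 ≤ (2:ℝ) ^ ((3:ℝ)/(2*B)) := by
      calc 1/B + 1 ≤ Real.exp (1/B) := h1
        _ = _ := h2
        _ ≤ _ := h3
        _ = _ := h4
    calc B + 1 = (1/B + 1) * B := by field_simp; ring
      _ ≤ (2:ℝ) ^ ((3:ℝ)/(2*B)) * B := by
          apply mul_le_mul_of_nonneg_right h5 (le_of_lt hBpos)
  -- raise to the w-th power
  have hpow : (B + 1) ^ w ≤ (2:ℝ) ^ (3*(w:ℝ)/(2*B)) * B ^ w := by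
    calc (B + 1) ^ w ≤ ((2:ℝ) ^ ((3:ℝ)/(2*B)) * B) ^ w := by
          apply pow_le_pow_left₀ (by positivity) hkey
      _ = ((2:ℝ) ^ ((3:ℝ)/(2*B))) ^ w * B ^ w := mul_pow _ _ _
      _ = (2:ℝ) ^ (3*(w:ℝ)/(2*B)) * B ^ w := by
          rw [← Real.rpow_natCast ((2:ℝ) ^ ((3:ℝ)/(2*B))) w, ← Real.rpow_mul (by norm_num)]
          congr 1
          field_simp
  -- 2^s ≥ 2^(2w/B)
  have hs2 : (2:ℝ) ^ (2*(w:ℝ)/B) ≤ (2:ℝ) ^ (s:ℕ) := by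
    rw [← Real.rpow_natCast 2 s]
    exact Real.rpow_le_rpow_of_exponent_le (by norm_num) hsw
  -- cast the main inequality
  have hcast : B ^ w * (2:ℝ) ^ (s:ℕ) ≤ (N:ℝ) * (B + 1) ^ w := by
    have := h
    have : ((b ^ w * 2 ^ s : ℕ) : ℝ) ≤ ((N * (b+1) ^ w : ℕ) : ℝ) := by exact_mod_cast h
    push_cast at this
    convert this using 2
  -- combine
  have hfinal : (2:ℝ) ^ ((w:ℝ) / (2*B)) * (B + 1) ^ w ≤ (N:ℝ) * (B + 1) ^ w := by
    calc (2:ℝ) ^ ((w:ℝ) / (2*B)) * (B + 1) ^ w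
        ≤ (2:ℝ) ^ ((w:ℝ) / (2*B)) * ((2:ℝ) ^ (3*(w:ℝ)/(2*B)) * B ^ w) := by
          apply mul_le_mul_of_nonneg_left hpow (Real.rpow_nonneg (by norm_num) _)
      _ = (2:ℝ) ^ ((w:ℝ) / (2*B) + 3*(w:ℝ)/(2*B)) * B ^ w := by
          rw [← mul_assoc, ← Real.rpow_add (by norm_num : (0:ℝ) < 2)]
      _ = (2:ℝ) ^ (2*(w:ℝ)/B) * B ^ w := by
          congr 2
          field_simp
          ring
      _ ≤ (2:ℝ) ^ (s:ℕ) * B ^ w := by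
          apply mul_le_mul_of_nonneg_right hs2 (by positivity)
      _ = B ^ w * (2:ℝ) ^ (s:ℕ) := by ring
      _ ≤ (N:ℝ) * (B + 1) ^ w := hcast
  have hBp1 : (0:ℝ) < (B + 1) ^ w := by positivity
  exact le_of_mul_le_mul_right hfinal hBp1


/-- There is an absolute constant `c > 0` such that for every
`ε ∈ (0,1)` and all positive integers `m`, `w` with `w = εm/2` and `w ∣ m`, there is a
family `F ⊆ {0,1}^m` of vectors of Hamming weight exactly `w`, with pairwise dot
products `< εw`, and `|F| ≥ 2^{c·ε²·m}`. -/
theorem stmt_10 :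
    ∃ c : ℝ, 0 < c ∧
      ∀ (ε : ℝ) (m w : ℕ), 0 < ε → ε < 1 → 0 < m → 0 < w →
        (w : ℝ) = ε * (m : ℝ) / 2 → w ∣ m →
        ∃ F : Finset (Fin m → Fin 2),
          (∀ u ∈ F, (Finset.univ.filter fun j => u j = 1).card = w) ∧
          (∀ u ∈ F, ∀ v ∈ F, u ≠ v →
            ((∑ j, (u j : ℕ) * (v j : ℕ) : ℕ) : ℝ) < ε * (w : ℝ)) ∧
          (2 : ℝ) ^ (c * ε ^ 2 * (m : ℝ)) ≤ (F.card : ℝ) := by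
  classical
  refine ⟨1/8, by norm_num, ?_⟩
  intro ε m w hε0 hε1 hm hwpos hwm hdvd
  set b : ℕ := m / w with hbdef
  have hmb : w * b = m := Nat.mul_div_cancel' hdvd
  have hbpos : 0 < b := by
    rcases Nat.eq_zero_or_pos b with h0 | h
    · rw [h0, Nat.mul_zero] at hmb; omega
    · exact h
  have hwR : (0:ℝ) < (w:ℝ) := by exact_mod_cast hwpos
  have hbR : (0:ℝ) < (b:ℝ) := by exact_mod_cast hbpos
  -- ε = 2 / b
  have hε : ε = 2 / (b:ℝ) := by
    have hmR : (m:ℝ) = (w:ℝ) * (b:ℝ) := by exact_mod_cast hmb.symm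
    rw [hmR] at hwm
    field_simp at hwm ⊢
    nlinarith [hwm]
  have hb3 : 3 ≤ b := by
    by_contra hc
    push_neg at hc
    interval_cases b <;> rw [hε] at hε1 <;> norm_num at hε1
  -- threshold
  set s : ℕ := ⌈ε * (w:ℝ)⌉₊ with hsdef
  have hεw_nonneg : (0:ℝ) ≤ ε * w := by positivity
  have hs_le_w : s ≤ w := by
    apply Nat.ceil_le.2
    nlinarith
  have hεw_le_s : ε * (w:ℝ) ≤ (s:ℝ) := Nat.le_ceil _
  have hsw : 2 * (w:ℝ) / (b:ℝ) ≤ (s:ℝ) := by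
    rw [hε] at hεw_le_s
    calc 2 * (w:ℝ) / (b:ℝ) = 2 / (b:ℝ) * (w:ℝ) := by ring
      _ ≤ (s:ℝ) := hεw_le_s
  obtain ⟨F₀, hgood, hcount⟩ := greedy w b s hs_le_w
  -- transport to binary vectors
  let e : Fin m ≃ Fin w × Fin b := (finCongr hmb.symm).trans finProdFinEquiv.symm
  let U : (Fin w → Fin b) → (Fin m → Fin 2) :=
    fun g j => if (e j).2 = g (e j).1 then 1 else 0
  have hUinj : Function.Injective U := by
    intro g g' H
    funext i
    have hj : e (e.symm (i, g i)) = (i, g i) := e.apply_symm_apply _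
    have h1 : U g (e.symm (i, g i)) = 1 := by simp [U, hj]
    have h2 := congrFun H (e.symm (i, g i))
    rw [h1] at h2
    simp only [U, hj] at h2
    by_contra hne
    rw [if_neg hne] at h2
    exact absurd h2 (by decide)
  refine ⟨F₀.image U, ?_, ?_, ?_⟩
  · -- Hamming weight
    intro u hu
    obtain ⟨g, _, rfl⟩ := Finset.mem_image.1 hu
    have heq : ∀ j : Fin m, (U g j = 1) ↔ ((e j).2 = g (e j).1) := by
      intro j
      constructor
      · intro h1
        by_contra hc
        simp only [U, if_neg hc] at h1
        exact absurd h1 (by decide)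
      · intro h1
        simp only [U, if_pos h1]
    calc (Finset.univ.filter fun j => U g j = 1).card
        = (Finset.univ.filter fun j : Fin m => (e j).2 = g (e j).1).card := by
          congr 1; apply Finset.filter_congr; intro j _; simp [heq j]
      _ = (Finset.univ.filter fun p : Fin w × Fin b => p.2 = g p.1).card := by
          apply Finset.card_bij' (fun j _ => e j) (fun p _ => e.symm p)
          · intro j hj
            simp only [Finset.mem_filter] at hj ⊢
            exact ⟨Finset.mem_univ _, hj.2⟩
          · intro p hp
            simp only [Finset.mem_filter, e.apply_symm_apply] at hp ⊢
            exact ⟨Finset.mem_univ _, hp.2⟩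
          · intro j _; exact e.symm_apply_apply j
          · intro p _; exact e.apply_symm_apply p
      _ = w := by
          rw [Finset.card_filter]
          rw [Fintype.sum_prod_type]
          have : ∀ i : Fin w, (∑ x : Fin b, if x = g i then 1 else 0) = 1 := by
            intro i; rw [Finset.sum_ite_eq' Finset.univ (g i) (fun _ => 1)]
            simp
          simp_rw [this, Finset.sum_const, Finset.card_univ, Fintype.card_fin, smul_eq_mul,
            mul_one]
  · -- dot products
    intro u hu v hv huv
    obtain ⟨g, hg, rfl⟩ := Finset.mem_image.1 hu
    obtain ⟨h, hh, rfl⟩ := Finset.mem_image.1 hv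
    have hgh : g ≠ h := fun hhh => huv (by rw [hhh])
    have hdot : (∑ j, (U g j : ℕ) * (U h j : ℕ)) = agreeN g h := by
      have hterm : ∀ j : Fin m, (U g j : ℕ) * (U h j : ℕ)
          = if ((e j).2 = g (e j).1 ∧ (e j).2 = h (e j).1) then 1 else 0 := by
        intro j
        have cast1 : ∀ (c : Prop) [Decidable c],
            (((if c then (1:Fin 2) else 0) : Fin 2) : ℕ) = if c then 1 else 0 := by
          intro c _; split <;> rfl
        simp only [U, cast1]
        by_cases h1 : (e j).2 = g (e j).1 <;> by_cases h2 : (e j).2 = h (e j).1 <;>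
          simp [h1, h2]
      simp_rw [hterm]
      rw [Fintype.sum_equiv e
        (fun j => if ((e j).2 = g (e j).1 ∧ (e j).2 = h (e j).1) then (1:ℕ) else 0)
        (fun p => if (p.2 = g p.1 ∧ p.2 = h p.1) then (1:ℕ) else 0) (fun j => rfl)]
      rw [Fintype.sum_prod_type]
      ·
        have : ∀ i : Fin w, (∑ x : Fin b, if (x = g i ∧ x = h i) then 1 else 0)
            = if g i = h i then 1 else 0 := by
          intro i
          by_cases hgi : g i = h i
          · rw [if_pos hgi]
            have : ∀ x : Fin b, (if (x = g i ∧ x = h i) then (1:ℕ) else 0)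
                = if x = g i then 1 else 0 := by
              intro x
              by_cases hx : x = g i
              · rw [if_pos ⟨hx, hx.trans hgi⟩, if_pos hx]
              · rw [if_neg (fun hc => hx hc.1), if_neg hx]
            simp_rw [this]
            rw [Finset.sum_ite_eq' Finset.univ (g i) (fun _ => 1)]
            simp
          · rw [if_neg hgi]
            apply Finset.sum_eq_zero
            intro x _
            rw [if_neg]
            rintro ⟨rfl, h2⟩
            exact hgi h2
        simp_rw [this]
        rw [agreeN, Finset.card_filter]
    rw [hdot]
    have hlt : agreeN g h < s := hgood g hg h hh hgh
    have := (Nat.lt_ceil).1 hlt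
    calc ((agreeN g h : ℕ) : ℝ) < ε * (w:ℝ) := this
      _ ≤ ε * (w:ℝ) := le_refl _
  · -- cardinality
    rw [Finset.card_image_of_injective _ hUinj]
    have hexp : (1/8 : ℝ) * ε ^ 2 * (m:ℝ) = (w:ℝ) / (2 * (b:ℝ)) := by
      have hmR : (m:ℝ) = (w:ℝ) * (b:ℝ) := by exact_mod_cast hmb.symm
      rw [hmR, hε]
      field_simp
      ring
    rw [hexp]
    exact real_est b w s F₀.card hb3 hsw hcount
end

section
/- Let n, m, M, w be positive integers with w ∣ M, let ε be a rational with 0 < ε, and let I ⊆ {0,1}^n be a finite set of vectors, each with exactly w ones, such that ⟨u,v⟩ ≤ ε·w for all distinct u, v ∈ I and ε < 1/(10·|I|). Then for all x, x' ∈ [m]^n, the sets subspace_I(x) and subspace_I(x') are either equal or disjoint. -/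
/-- The dot product `⟨x, u⟩ = Σ_j x_j·u_j` of a point of `[m]^n` with a vector of `ℕ^n`. -/
def ip {n m : ℕ} (x : Fin n → Fin m) (u : Fin n → ℕ) : ℕ := ∑ j, (x j : ℕ) * u j

/-- The boundary set `B = {x ∈ [m]^n : x_i < n² or x_i > m − n² for some i}`. -/
def boundarySet (n m : ℕ) : Set (Fin n → Fin m) :=
  {x | ∃ i, (x i : ℕ) < n ^ 2 ∨ m - n ^ 2 < (x i : ℕ)}

/-- `subspace_I(x) = {x' ∈ [m]^n : x' = x + Σ_{u∈I} t_u·u, t ∈ ℤ^I, ‖t‖_∞ ≤ 2M/w,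
block_I(x') = block_I(x)}`. -/
def subspaceSet (n m M w : ℕ) (I : Finset (Fin n → ℕ)) (x : Fin n → Fin m) :
    Set (Fin n → Fin m) :=
  {x' | ∃ t : (Fin n → ℕ) → ℤ,
    (∀ u ∈ I, (t u).natAbs ≤ 2 * (M / w)) ∧
    (∀ i, ((x' i : ℕ) : ℤ) = ((x i : ℕ) : ℤ) + ∑ u ∈ I, t u * (u i : ℤ)) ∧
    (∀ u ∈ I, ip x' u / M = ip x u / M)}

lemma divlem {M a b : ℕ} (hM : 0 < M) (h : a / M = b / M) :
    (a:ℤ) - b < M ∧ (b:ℤ) - a < M := by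
  have h1 := Nat.div_add_mod a M
  rw [h] at h1
  have h2 := Nat.div_add_mod b M
  have h3 := Nat.mod_lt a hM
  have h4 := Nat.mod_lt b hM
  omega

lemma ident {n m : ℕ} (I : Finset (Fin n → ℕ)) (x z : Fin n → Fin m)
    (r : (Fin n → ℕ) → ℤ)
    (hz : ∀ i, ((z i : ℕ) : ℤ) = ((x i : ℕ) : ℤ) + ∑ u ∈ I, r u * (u i : ℤ))
    (u : Fin n → ℕ) :
    (ip z u : ℤ) = (ip x u : ℤ) + ∑ v ∈ I, r v * ((∑ i, v i * u i : ℕ) : ℤ) := by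
  unfold ip
  push_cast
  simp only [hz, add_mul, Finset.sum_add_distrib, Finset.sum_mul]
  rw [Finset.sum_comm]
  congr 1
  refine Finset.sum_congr rfl fun v _ => ?_
  rw [Finset.mul_sum]
  exact Finset.sum_congr rfl fun i _ => by ring

lemma key_bound {n m M w : ℕ} (hM : 0 < M) (hw : 0 < w) (hwM : w ∣ M)
    (ε : ℚ) (hε : 0 < ε) (I : Finset (Fin n → ℕ))
    (hI01 : ∀ u ∈ I, ∀ i, u i ≤ 1) (hIw : ∀ u ∈ I, ∑ i, u i = w)
    (hIdot : ∀ u ∈ I, ∀ v ∈ I, u ≠ v → ((∑ i, u i * v i : ℕ) : ℚ) ≤ ε * (w : ℚ))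
    (hεI : ε < 1 / (10 * (I.card : ℚ)))
    (x z : Fin n → Fin m) (r : (Fin n → ℕ) → ℤ)
    (hr : ∀ u ∈ I, (r u).natAbs ≤ 4 * (M / w))
    (hz : ∀ i, ((z i : ℕ) : ℤ) = ((x i : ℕ) : ℤ) + ∑ u ∈ I, r u * (u i : ℤ))
    (hblk : ∀ u ∈ I, ip z u / M = ip x u / M) :
    ∀ u ∈ I, (r u).natAbs ≤ 2 * (M / w) := by
  -- I is nonempty
  have hcard : 0 < I.card := by
    rcases Nat.eq_zero_or_pos I.card with h0 | h
    · rw [h0] at hεI; norm_num at hεI; linarith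
    · exact h
  have hεc : ε * I.card < 1 / 10 := by
    have h10 : (0:ℚ) < 10 * (I.card : ℚ) := by positivity
    rw [lt_div_iff₀ h10] at hεI
    nlinarith [hεI]
  have hMw : ((M / w : ℕ) : ℚ) * w = M := by
    rw [← Nat.cast_mul, Nat.div_mul_cancel hwM]
  intro u hu
  have huu : ((∑ i, u i * u i : ℕ) : ℤ) = (w : ℤ) := by
    have : ∀ i, u i * u i = u i := fun i => by
      have := hI01 u hu i; interval_cases h : u i <;> simp
    simp_rw [this, hIw u hu]
  have hident := ident I x z r hz u
  rw [← Finset.add_sum_erase _ _ hu, huu] at hident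
  have hclose := divlem hM (hblk u hu)
  have hmain : r u * w = ((ip z u : ℤ) - ip x u) - ∑ v ∈ I.erase u, r v * ((∑ i, v i * u i : ℕ) : ℤ) := by
    linarith [hident]
  have h1 : (r u : ℚ) * w = ((ip z u : ℚ) - ip x u) - ∑ v ∈ I.erase u, (r v : ℚ) * ((∑ i, v i * u i : ℕ) : ℚ) := by
    exact_mod_cast congrArg (fun z : ℤ => (z : ℚ)) hmain
  have h2 : |(ip z u : ℚ) - ip x u| ≤ M - 1 := by
    have h2' : |(ip z u : ℤ) - (ip x u : ℤ)| ≤ (M : ℤ) - 1 := by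
      have c1 := Int.lt_iff_add_one_le.mp hclose.1
      have c2 := Int.lt_iff_add_one_le.mp hclose.2
      rw [abs_le]; constructor <;> linarith
    exact_mod_cast h2'
  -- bound the error sum
  have hS : ∑ v ∈ I.erase u, |(r v : ℚ) * ((∑ i, v i * u i : ℕ) : ℚ)| ≤
      (I.card : ℚ) * ((4 * (M / w : ℕ) : ℚ) * (ε * w)) := by
    have hterm : ∀ v ∈ I.erase u, |(r v : ℚ) * ((∑ i, v i * u i : ℕ) : ℚ)| ≤
        (4 * (M / w : ℕ) : ℚ) * (ε * w) := by
      intro v hv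
      have hvI : v ∈ I := Finset.mem_of_mem_erase hv
      have hvne : v ≠ u := Finset.ne_of_mem_erase hv
      have hrv : |(r v : ℚ)| ≤ (4 * (M / w : ℕ) : ℚ) := by
        rw [← Int.cast_abs, ← Nat.cast_natAbs]
        exact_mod_cast hr v hvI
      have hcv : ((∑ i, v i * u i : ℕ) : ℚ) ≤ ε * w := hIdot v hvI u hu hvne
      rw [abs_mul, abs_of_nonneg (by positivity : (0:ℚ) ≤ ((∑ i, v i * u i : ℕ) : ℚ))]
      exact mul_le_mul hrv hcv (by positivity) (by positivity)
    calc ∑ v ∈ I.erase u, |(r v : ℚ) * ((∑ i, v i * u i : ℕ) : ℚ)|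
        ≤ ∑ _v ∈ I.erase u, (4 * (M / w : ℕ) : ℚ) * (ε * w) :=
          Finset.sum_le_sum hterm
      _ = ((I.erase u).card : ℚ) * ((4 * (M / w : ℕ) : ℚ) * (ε * w)) := by
          rw [Finset.sum_const, nsmul_eq_mul]
      _ ≤ (I.card : ℚ) * ((4 * (M / w : ℕ) : ℚ) * (ε * w)) := by
          have h1 : (I.erase u).card ≤ I.card := Finset.card_erase_le
          have h2 : ((I.erase u).card : ℚ) ≤ (I.card : ℚ) := by exact_mod_cast h1
          have h3 : (0:ℚ) ≤ (4 * (M / w : ℕ) : ℚ) * (ε * w) := by positivity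
          nlinarith
  have hQ : |(r u : ℚ)| * w ≤ M - 1 + (I.card : ℚ) * ((4 * (M / w : ℕ) : ℚ) * (ε * w)) := by
    have hw0 : (0:ℚ) ≤ (w:ℚ) := by positivity
    have e1 : |(r u : ℚ)| * w = |(r u : ℚ) * w| := by
      rw [abs_mul, abs_of_nonneg hw0]
    rw [e1, h1]
    calc |((ip z u : ℚ) - ip x u) - ∑ v ∈ I.erase u, (r v : ℚ) * ((∑ i, v i * u i : ℕ) : ℚ)|
        ≤ |(ip z u : ℚ) - ip x u| + |∑ v ∈ I.erase u, (r v : ℚ) * ((∑ i, v i * u i : ℕ) : ℚ)| :=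
          abs_sub _ _
      _ ≤ (M - 1) + ∑ v ∈ I.erase u, |(r v : ℚ) * ((∑ i, v i * u i : ℕ) : ℚ)| :=
          add_le_add h2 (Finset.abs_sum_le_sum_abs _ _)
      _ ≤ M - 1 + (I.card : ℚ) * ((4 * (M / w : ℕ) : ℚ) * (ε * w)) := by linarith [hS]
  -- conclude
  have hfin : |(r u : ℚ)| * w < 2 * M := by
    have e2 : (I.card : ℚ) * ((4 * (M / w : ℕ) : ℚ) * (ε * w)) = 4 * M * (ε * I.card) := by
      rw [show (4 * (M / w : ℕ) : ℚ) * (ε * w) = 4 * (((M / w : ℕ) : ℚ) * w) * ε by ring, hMw]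
      ring
    rw [e2] at hQ
    have hM1 : (1:ℚ) ≤ (M:ℚ) := by exact_mod_cast hM
    nlinarith [hεc, hM1]
  have hnat : (r u).natAbs * w < 2 * M := by
    have habs : ((r u).natAbs : ℚ) = |(r u : ℚ)| := (Nat.cast_natAbs _).trans Int.cast_abs
    have : (((r u).natAbs : ℚ)) * w < 2 * (M:ℚ) := by rw [habs]; exact hfin
    exact_mod_cast this
  have : (r u).natAbs ≤ (2 * M) / w := (Nat.le_div_iff_mul_le hw).2 (Nat.le_of_lt hnat)
  rwa [Nat.mul_div_assoc 2 hwM] at this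


/-- For nearly orthogonal `0/1`-vectors `I` of weight `w` with pairwise
dot products `≤ εw` and `ε < 1/(10|I|)`, any two subspaces `subspace_I(x)` and
`subspace_I(x')` are equal or disjoint. -/
theorem stmt_13 (n m M w : ℕ) (hn : 0 < n) (hm : 0 < m) (hM : 0 < M) (hw : 0 < w)
    (hwM : w ∣ M) (ε : ℚ) (hε : 0 < ε)
    (I : Finset (Fin n → ℕ))
    (hI01 : ∀ u ∈ I, ∀ i, u i ≤ 1) (hIw : ∀ u ∈ I, ∑ i, u i = w)
    (hIdot : ∀ u ∈ I, ∀ v ∈ I, u ≠ v → ((∑ i, u i * v i : ℕ) : ℚ) ≤ ε * (w : ℚ))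
    (hεI : ε < 1 / (10 * (I.card : ℚ))) :
    ∀ x x' : Fin n → Fin m,
      subspaceSet n m M w I x = subspaceSet n m M w I x' ∨
      Disjoint (subspaceSet n m M w I x) (subspaceSet n m M w I x') := by
  -- main step: if y ∈ subspaceSet x then the two subspace sets coincide
  have main : ∀ (x y : Fin n → Fin m), y ∈ subspaceSet n m M w I x →
      subspaceSet n m M w I x = subspaceSet n m M w I y := by
    intro x y hy
    obtain ⟨t, ht, hty, htb⟩ := hy
    ext z
    constructor
    · rintro ⟨s, hs, hsz, hsb⟩
      refine ⟨fun v => s v - t v, ?_, ?_, ?_⟩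
      · -- apply key_bound with the representation of z over y
        refine key_bound hM hw hwM ε hε I hI01 hIw hIdot hεI y z (fun v => s v - t v) ?_ ?_ ?_
        · intro v hv
          show (s v - t v).natAbs ≤ 4 * (M / w)
          have h1 := hs v hv
          have h2 := ht v hv
          have := Int.natAbs_sub_le (s v) (t v)
          omega
        · intro i
          have h1 := hsz i
          have h2 := hty i
          simp only [sub_mul, Finset.sum_sub_distrib]
          linarith [h1, h2]
        · intro v hv
          rw [hsb v hv, htb v hv]
      · intro i
        have h1 := hsz i
        have h2 := hty i
        simp only [sub_mul, Finset.sum_sub_distrib]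
        linarith [h1, h2]
      · intro v hv
        rw [hsb v hv, htb v hv]
    · rintro ⟨s, hs, hsz, hsb⟩
      refine ⟨fun v => t v + s v, ?_, ?_, ?_⟩
      · refine key_bound hM hw hwM ε hε I hI01 hIw hIdot hεI x z (fun v => t v + s v) ?_ ?_ ?_
        · intro v hv
          show (t v + s v).natAbs ≤ 4 * (M / w)
          have h1 := hs v hv
          have h2 := ht v hv
          have := Int.natAbs_add_le (t v) (s v)
          omega
        · intro i
          have h1 := hsz i
          have h2 := hty i
          simp only [add_mul, Finset.sum_add_distrib]
          linarith [h1, h2]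
        · intro v hv
          rw [hsb v hv, htb v hv]
      · intro i
        have h1 := hsz i
        have h2 := hty i
        simp only [add_mul, Finset.sum_add_distrib]
        linarith [h1, h2]
      · intro v hv
        rw [hsb v hv, htb v hv]
  intro x x'
  by_cases hd : Disjoint (subspaceSet n m M w I x) (subspaceSet n m M w I x')
  · exact Or.inr hd
  · left
    rw [Set.not_disjoint_iff] at hd
    obtain ⟨y, hy1, hy2⟩ := hd
    rw [main x y hy1, main x' y hy2]
end

section
/- Let n, m, M, w be positive integers with w ∣ M and 2M/w < n², and let j ∈ {0,1}^n have exactly w ones. Then: (1) for every x ∈ [m]^n, |line_j(x)| ≤ M/w, every y ∈ line_j(x) equals x + λ·j for some integer λ with |λ| ≤ 2M/w, and if x ∉ B then |line_j(x)| = M/w. Moreover, let δ, Δ be rationals with 0 < δ < Δ ≤ 1 such that 1/Δ, δ·M/w and Δ·M/w are integers. Then for every x ∈ [m]^n ∖ B: (2) for every c ∈ Δ·ℤ ∩ [0,1), the number of y ∈ line_j(x) with c·M ≤ ⟨y,j⟩ mod M < (c+δ)·M equals δ·M/w; and (3) for every c ∈ Δ·ℤ ∩ (0,1], the number of y ∈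 line_j(x) with (c−δ)·M ≤ ⟨y,j⟩ mod M < c·M equals δ·M/w. -/
/-- The line through `x` in direction `j`:
`line_j(x) = {x' ∈ [m]^n : x' = x + λ·j for some λ ∈ ℤ with ⌊⟨x',j⟩/M⌋ = ⌊⟨x,j⟩/M⌋}`. -/
def lineDir (n m M : ℕ) (j : Fin n → ℕ) (x : Fin n → Fin m) : Set (Fin n → Fin m) :=
  {x' | (∃ lam : ℤ, ∀ i, ((x' i : ℕ) : ℤ) = ((x i : ℕ) : ℤ) + lam * (j i : ℤ)) ∧
    ip x' j / M = ip x j / M}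

section helper
variable {n m M w : ℕ} {j : Fin n → ℕ}

lemma ip_linear (hj01 : ∀ i, j i ≤ 1) (hjw : ∑ i, j i = w)
    {x y : Fin n → Fin m} {lam : ℤ}
    (h : ∀ i, ((y i : ℕ) : ℤ) = ((x i : ℕ) : ℤ) + lam * (j i : ℤ)) :
    ((ip y j : ℕ) : ℤ) = ((ip x j : ℕ) : ℤ) + lam * w := by
  have hsq : ∀ i : Fin n, ((j i : ℤ)) * (j i : ℤ) = (j i : ℤ) := fun i => by
    have := hj01 i; interval_cases h : (j i) <;> simp
  unfold ip
  push_cast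
  calc (∑ i, ((y i : ℕ) : ℤ) * (j i : ℤ))
      = ∑ i, (((x i : ℕ) : ℤ) * j i + lam * ((j i : ℤ) * j i)) := by
        refine Finset.sum_congr rfl fun i _ => ?_; rw [h i]; ring
    _ = ∑ i, (((x i : ℕ) : ℤ) * j i + lam * (j i : ℤ)) := by
        refine Finset.sum_congr rfl fun i _ => ?_; rw [hsq i]
    _ = (∑ i, ((x i : ℕ) : ℤ) * j i) + lam * ∑ i, (j i : ℤ) := by
        rw [Finset.sum_add_distrib, Finset.mul_sum]
    _ = (∑ i, ((x i : ℕ) : ℤ) * j i) + lam * w := by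
        rw [← Nat.cast_sum, hjw]

lemma lam_bounds (hw : 0 < w) {s r q lam : ℤ} (hr : 0 ≤ r) (hrw : r < w)
    (h1 : 0 ≤ w*s + r + lam*w) (h2 : w*s + r + lam*w < w*q) : -s ≤ lam ∧ lam < q - s := by
  have hww : (0:ℤ) < w := by exact_mod_cast hw
  constructor
  · by_contra h
    push_neg at h
    have h' : lam ≤ -s - 1 := by omega
    nlinarith [mul_le_mul_of_nonneg_left h' hww.le]
  · by_contra h
    push_neg at h
    have h' : q - s ≤ lam := h
    nlinarith [mul_le_mul_of_nonneg_left h' hww.le]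

lemma decomp (hw : 0 < w) (hM : 0 < M) (hwM : w ∣ M) (a : ℕ) :
    a = M * (a/M) + w * ((a % M)/w) + a % w ∧ a % w < w ∧ (a % M)/w < M/w := by
  have h1 := Nat.div_add_mod a M
  have h2 := Nat.div_add_mod (a % M) w
  have h3 := Nat.mod_mod_of_dvd a hwM
  refine ⟨by omega, Nat.mod_lt _ hw, ?_⟩
  have hqw : M / w * w = M := Nat.div_mul_cancel hwM
  have : a % M < M := Nat.mod_lt _ hM
  rw [Nat.div_lt_iff_lt_mul hw]
  omega

/-- For any member of the line with witness `lam`, we get `-s ≤ lam < q - s`. -/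
lemma lam_range (hM : 0 < M) (hw : 0 < w) (hwM : w ∣ M)
    (hj01 : ∀ i, j i ≤ 1) (hjw : ∑ i, j i = w)
    {x y : Fin n → Fin m} {lam : ℤ}
    (hlam : ∀ i, ((y i : ℕ) : ℤ) = ((x i : ℕ) : ℤ) + lam * (j i : ℤ))
    (hfloor : ip y j / M = ip x j / M) :
    -(((ip x j % M)/w : ℕ) : ℤ) ≤ lam ∧ lam < (M/w : ℕ) - (((ip x j % M)/w : ℕ) : ℤ) := by
  set a := ip x j with ha
  set b := ip y j with hb
  obtain ⟨hdec, hr, hs⟩ := decomp hw hM hwM a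
  have hbZ : (b:ℤ) = (a:ℤ) + lam * w := ip_linear hj01 hjw hlam
  have hlow : M * (a / M) ≤ b := by
    rw [← hfloor]; exact Nat.mul_div_le b M
  have hhigh : b < M * (a / M) + M := by
    have h1 := Nat.div_add_mod b M
    have h2 : b % M < M := Nat.mod_lt _ hM
    have h3 : b / M = a / M := hfloor
    rw [h3] at h1
    omega
  have hMq : w * (M/w) = M := Nat.mul_div_cancel' hwM
  have hdecZ : (a:ℤ) = (M:ℤ) * (a/M : ℕ) + (w:ℤ) * ((a % M)/w : ℕ) + (a % w : ℕ) := by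
    exact_mod_cast hdec
  have hMqZ : (w:ℤ) * ((M/w : ℕ):ℤ) = M := by exact_mod_cast hMq
  have h1 : (0:ℤ) ≤ (w:ℤ)*((a % M)/w : ℕ) + (a % w : ℕ) + lam*w := by
    have : ((M:ℤ) * (a/M : ℕ)) ≤ (b:ℤ) := by exact_mod_cast hlow
    linarith [hbZ, hdecZ]
  have h2 : (w:ℤ)*((a % M)/w : ℕ) + (a % w : ℕ) + lam*w < (w:ℤ)*((M/w : ℕ):ℤ) := by
    have : (b:ℤ) < (M:ℤ) * (a/M : ℕ) + M := by exact_mod_cast hhigh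
    linarith [hbZ, hdecZ, hMqZ]
  exact lam_bounds hw (by positivity) (by exact_mod_cast hr) h1 h2


/-- Parametrization of the line through an interior point. -/
lemma line_param (hn : 0 < n) (hM : 0 < M) (hw : 0 < w) (hwM : w ∣ M)
    (h2Mw : 2 * (M / w) < n ^ 2)
    (hj01 : ∀ i, j i ≤ 1) (hjw : ∑ i, j i = w)
    {x : Fin n → Fin m} (hx : x ∉ boundarySet n m) :
    ∃ g : ℕ → (Fin n → Fin m),
      (∀ t, t < M/w → g t ∈ lineDir n m M j x ∧
        ip (g t) j % M = t * w + ip x j % w) ∧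
      (∀ t t', t < M/w → t' < M/w → g t = g t' → t = t') ∧
      (∀ y ∈ lineDir n m M j x, ∃ t, t < M/w ∧ y = g t) := by
  have hxB : ∀ i, n ^ 2 ≤ (x i : ℕ) ∧ (x i : ℕ) ≤ m - n ^ 2 := by
    intro i
    simp only [boundarySet, Set.mem_setOf_eq, not_exists, not_or, not_lt] at hx
    exact ⟨(hx i).1, (hx i).2⟩
  set a := ip x j with ha
  set q := M / w with hqdef
  set s := (a % M) / w with hsdef
  set r := a % w with hrdef
  set k := a / M with hkdef
  obtain ⟨hdec, hr, hs⟩ := decomp hw hM hwM a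
  have hMq : w * q = M := Nat.mul_div_cancel' hwM
  clear_value q s r k
  -- coordinate bounds
  have hsx : ∀ i, s ≤ (x i : ℕ) := by
    intro i
    have h1 := (hxB i).1
    omega
  have hbound : ∀ t, t < q → ∀ i, (x i : ℕ) + t * j i - s * j i < m := by
    intro t ht i
    have h1 := (hxB i).1
    have h2 := (hxB i).2
    have h3 : (x i : ℕ) < m := (x i).isLt
    have := hj01 i
    interval_cases h : (j i) <;> simp <;> omega
  classical
  set g : ℕ → (Fin n → Fin m) := fun t =>
    if ht : t < q then (fun i => ⟨(x i : ℕ) + t * j i - s * j i, hbound t ht i⟩) else x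
    with hgdef
  have hgval : ∀ t, t < q → ∀ i, ((g t i : ℕ)) = (x i : ℕ) + t * j i - s * j i := by
    intro t ht i
    simp only [hgdef, dif_pos ht]
  have hcoordZ : ∀ t, t < q → ∀ i,
      ((g t i : ℕ) : ℤ) = ((x i : ℕ) : ℤ) + ((t:ℤ) - (s:ℤ)) * (j i : ℤ) := by
    intro t ht i
    rw [hgval t ht i]
    have h1 := hsx i
    have := hj01 i
    interval_cases h : (j i) <;> simp <;> omega
  have hdecZ : (a:ℤ) = (M:ℤ)*k + (w:ℤ)*s + r := by
    rw [hkdef, hsdef, hrdef]; exact_mod_cast hdec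
  have hipt : ∀ t, t < q → ip (g t) j = M * k + (t * w + r) := by
    intro t ht
    have hz := ip_linear hj01 hjw (hcoordZ t ht)
    have hzz : ((ip (g t) j : ℕ) : ℤ) = ((M * k + (t * w + r) : ℕ) : ℤ) := by
      push_cast
      rw [hz, ← ha, hdecZ]
      ring
    exact_mod_cast hzz
  have htwr : ∀ t, t < q → t * w + r < M := by
    intro t ht
    calc t*w + r < t*w + w := by omega
      _ = (t+1)*w := by ring
      _ ≤ q*w := Nat.mul_le_mul_right w (by omega)
      _ = M := by rw [mul_comm]; exact hMq
  refine ⟨g, ?_, ?_, ?_⟩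
  · intro t ht
    have hip := hipt t ht
    have hlt := htwr t ht
    refine ⟨⟨⟨(t:ℤ) - (s:ℤ), hcoordZ t ht⟩, ?_⟩, ?_⟩
    · rw [hip, ← ha, ← hkdef, Nat.mul_add_div hM, Nat.div_eq_of_lt hlt, Nat.add_zero]
    · rw [hip, Nat.mul_add_mod, Nat.mod_eq_of_lt hlt]
  · intro t t' ht ht' heq
    have hex : ∃ i0, j i0 = 1 := by
      by_contra h
      push_neg at h
      have hz : ∀ i ∈ Finset.univ, j i = 0 := fun i _ => by
        have := hj01 i; have := h i; omega
      rw [Finset.sum_eq_zero hz] at hjw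
      omega
    obtain ⟨i0, hi0⟩ := hex
    have h2 : (g t i0 : ℕ) = (g t' i0 : ℕ) := by rw [heq]
    rw [hgval t ht i0, hgval t' ht' i0, hi0] at h2
    have := hsx i0
    omega
  · intro y hy
    obtain ⟨⟨lam, hlam⟩, hfloor⟩ := hy
    have hb := lam_range hM hw hwM hj01 hjw hlam hfloor
    rw [← ha, ← hsdef, ← hqdef] at hb
    have ht : (lam + (s:ℤ)).toNat < q := by omega
    refine ⟨(lam + (s:ℤ)).toNat, ht, ?_⟩
    funext i
    apply Fin.ext
    have h3 : ((y i : ℕ):ℤ) = ((g ((lam + (s:ℤ)).toNat) i : ℕ):ℤ) := by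
      rw [hcoordZ _ ht, hlam i]
      have h4 : (((lam + (s:ℤ)).toNat : ℕ) : ℤ) = lam + s := by omega
      rw [h4]
      ring
    exact_mod_cast h3


lemma line_card_le (hM : 0 < M) (hw : 0 < w) (hwM : w ∣ M)
    (hj01 : ∀ i, j i ≤ 1) (hjw : ∑ i, j i = w) (x : Fin n → Fin m) :
    (lineDir n m M j x).ncard ≤ M / w := by
  classical
  set s : ℕ := (ip x j % M) / w with hsdef
  set q : ℕ := M / w with hqdef
  clear_value s q
  have hwZ : ((w:ℤ)) ≠ 0 := by exact_mod_cast hw.ne'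
  have hlam_eq : ∀ y ∈ lineDir n m M j x,
      ∀ lam : ℤ, (∀ i, ((y i : ℕ) : ℤ) = ((x i : ℕ) : ℤ) + lam * (j i : ℤ)) →
      ((ip y j : ℤ) - (ip x j : ℤ)) / (w:ℤ) = lam := by
    intro y _ lam hlam
    rw [ip_linear hj01 hjw hlam]
    have : ((ip x j : ℕ):ℤ) + lam * w - (ip x j : ℕ) = lam * w := by ring
    rw [this]
    exact Int.mul_ediv_cancel lam hwZ
  have hle := Set.ncard_le_ncard_of_injOn
    (fun y => ((ip y j : ℤ) - (ip x j : ℤ)) / (w:ℤ))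
    (s := lineDir n m M j x)
    (t := ↑(Finset.Ico (-(s:ℤ)) ((q:ℤ) - (s:ℤ))))
    ?_ ?_ (Finset.finite_toSet _)
  · rw [Set.ncard_coe_finset] at hle
    have hcard : (Finset.Ico (-(s:ℤ)) ((q:ℤ) - (s:ℤ))).card = q := by
      rw [Int.card_Ico]
      omega
    rwa [hcard] at hle
  · intro y hy
    obtain ⟨⟨lam, hlam⟩, hfloor⟩ := hy
    have hb := lam_range hM hw hwM hj01 hjw hlam hfloor
    simp only [Finset.coe_Ico, Set.mem_Ico]
    rw [hlam_eq y ⟨⟨lam, hlam⟩, hfloor⟩ lam hlam]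
    rw [← hsdef, ← hqdef] at hb
    exact hb
  · intro y1 h1 y2 h2 hf
    obtain ⟨⟨lam1, hlam1⟩, hfloor1⟩ := h1
    obtain ⟨⟨lam2, hlam2⟩, hfloor2⟩ := h2
    have e1 := hlam_eq y1 ⟨⟨lam1, hlam1⟩, hfloor1⟩ lam1 hlam1
    have e2 := hlam_eq y2 ⟨⟨lam2, hlam2⟩, hfloor2⟩ lam2 hlam2
    simp only at hf
    rw [e1, e2] at hf
    funext i
    apply Fin.ext
    have : ((y1 i : ℕ):ℤ) = ((y2 i : ℕ):ℤ) := by rw [hlam1 i, hlam2 i, hf]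
    exact_mod_cast this

lemma bridgeA {e t r w : ℕ} (hrw : r < w) (h : (e:ℚ) * w ≤ (t:ℚ)*w + r) : e ≤ t := by
  by_contra hc
  push_neg at hc
  have h1 : (t:ℚ) + 1 ≤ e := by exact_mod_cast hc
  have h2 : (r:ℚ) < w := by exact_mod_cast hrw
  have h3 : (0:ℚ) ≤ w := by positivity
  nlinarith

lemma bridgeA' {e t r w : ℕ} (h : e ≤ t) : (e:ℚ) * w ≤ (t:ℚ)*w + r := by
  have h1 : (e:ℚ) ≤ t := by exact_mod_cast h
  have h2 : (0:ℚ) ≤ r := by positivity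
  have h3 : (0:ℚ) ≤ w := by positivity
  nlinarith

lemma bridgeB {f t r w : ℕ} (hrw : r < w) (h : (t:ℚ)*w + r < (f:ℚ)*w) : t < f := by
  by_contra hc
  push_neg at hc
  have h1 : (f:ℚ) ≤ t := by exact_mod_cast hc
  have h2 : (0:ℚ) ≤ r := by positivity
  have h3 : (0:ℚ) ≤ w := by positivity
  nlinarith

lemma bridgeB' {f t r w : ℕ} (hrw : r < w) (h : t < f) : (t:ℚ)*w + r < (f:ℚ)*w := by
  have h1 : (t:ℚ) + 1 ≤ f := by exact_mod_cast h
  have h2 : (r:ℚ) < w := by exact_mod_cast hrw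
  have h3 : (0:ℚ) ≤ w := by positivity
  nlinarith

lemma window_count (hn : 0 < n) (hM : 0 < M) (hw : 0 < w) (hwM : w ∣ M)
    (h2Mw : 2 * (M / w) < n ^ 2) (hj01 : ∀ i, j i ≤ 1) (hjw : ∑ i, j i = w)
    {x : Fin n → Fin m} (hx : x ∉ boundarySet n m) (e f : ℕ) (hfq : f ≤ M / w)
    (lo hi : ℚ) (hlo : lo = (e:ℚ) * w) (hhi : hi = (f:ℚ) * w) :
    {y | y ∈ lineDir n m M j x ∧ lo ≤ ((ip y j % M : ℕ) : ℚ) ∧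
      ((ip y j % M : ℕ) : ℚ) < hi}.ncard = f - e := by
  obtain ⟨g, hg1, hg2, hg3⟩ := line_param hn hM hw hwM h2Mw hj01 hjw hx
  have hr : ip x j % w < w := Nat.mod_lt _ hw
  have key : {y | y ∈ lineDir n m M j x ∧ lo ≤ ((ip y j % M : ℕ) : ℚ) ∧
      ((ip y j % M : ℕ) : ℚ) < hi} = g '' (Set.Ico e f) := by
    ext y
    simp only [Set.mem_setOf_eq, Set.mem_image, Set.mem_Ico]
    constructor
    · rintro ⟨hy, hc1, hc2⟩
      obtain ⟨t, ht, rfl⟩ := hg3 y hy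
      rw [(hg1 t ht).2, hlo] at hc1
      rw [(hg1 t ht).2, hhi] at hc2
      push_cast at hc1 hc2
      exact ⟨t, ⟨bridgeA hr hc1, bridgeB hr hc2⟩, rfl⟩
    · rintro ⟨t, ⟨he, hf'⟩, rfl⟩
      have ht : t < M / w := lt_of_lt_of_le hf' hfq
      refine ⟨(hg1 t ht).1, ?_, ?_⟩
      · rw [(hg1 t ht).2, hlo]
        push_cast
        exact bridgeA' he
      · rw [(hg1 t ht).2, hhi]
        push_cast
        exact bridgeB' hr hf'
  rw [key, Set.ncard_image_of_injOn, ← Finset.coe_Ico, Set.ncard_coe_finset, Nat.card_Ico]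
  intro t ht t' ht' hgt
  exact hg2 t t' (lt_of_lt_of_le ht.2 hfq) (lt_of_lt_of_le ht'.2 hfq) hgt

end helper


lemma part2_arith {M w : ℕ} (hM : 0 < M) (hw : 0 < w) (hMq : w * (M/w) = M)
    {δ Δ : ℚ} {invΔ dMw DMw : ℕ} (hδ : 0 < δ) (hδΔ : δ < Δ) (hΔ1 : Δ ≤ 1)
    (hinv : (invΔ:ℚ) = 1/Δ) (hdMw : (dMw:ℚ) = δ*(M:ℚ)/(w:ℚ)) (hDMw : (DMw:ℚ) = Δ*(M:ℚ)/(w:ℚ))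
    {c : ℚ} (hc : ∃ k : ℤ, c = Δ*k) (hc0 : 0 ≤ c) (hc1 : c < 1) :
    ∃ e : ℕ, e + dMw ≤ M/w ∧ c * M = (e:ℚ)*w ∧ (c+δ)*M = ((e+dMw : ℕ):ℚ)*w := by
  obtain ⟨kc, hkc⟩ := hc
  have hΔ0 : (0:ℚ) < Δ := lt_trans hδ hδΔ
  have hwpos : (0:ℚ) < w := by exact_mod_cast hw
  have hw0 : ((w:ℚ)) ≠ 0 := ne_of_gt hwpos
  have hMpos : (0:ℚ) < M := by exact_mod_cast hM
  have hMQ : (M:ℚ) = (w:ℚ) * ((M/w : ℕ):ℚ) := by exact_mod_cast hMq.symm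
  have hq' : ((M/w : ℕ):ℚ) * w = M := by rw [mul_comm]; exact hMQ.symm
  have hinv1 : Δ * (invΔ:ℚ) = 1 := by rw [hinv]; field_simp
  have hk0 : 0 ≤ kc := by
    by_contra hneg
    push_neg at hneg
    have h0 : kc ≤ -1 := by omega
    have h1 : (kc:ℚ) ≤ -1 := by exact_mod_cast h0
    nlinarith
  have hkQ : ((kc.toNat : ℕ):ℚ) = (kc:ℚ) := by exact_mod_cast Int.toNat_of_nonneg hk0
  have hkinv : (kc:ℚ) + 1 ≤ (invΔ:ℚ) := by
    have h1 : (kc:ℚ) < invΔ := by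
      by_contra h
      push_neg at h
      nlinarith
    have h2 : kc < (invΔ:ℤ) := by exact_mod_cast h1
    have h3 : kc + 1 ≤ (invΔ:ℤ) := by omega
    exact_mod_cast h3
  have hcδ : c + δ < 1 := by nlinarith
  have hE : ((kc.toNat * DMw : ℕ):ℚ) * w = c * M := by
    push_cast
    rw [hkQ, hDMw, hkc]
    field_simp
  have hd : (dMw:ℚ) * w = δ * M := by rw [hdMw]; field_simp
  have hsum : ((kc.toNat * DMw + dMw : ℕ):ℚ) * w = (c+δ) * M := by
    push_cast
    push_cast at hE
    linear_combination hE + hd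
  refine ⟨kc.toNat * DMw, ?_, hE.symm, hsum.symm⟩
  have h6 : ((kc.toNat * DMw + dMw : ℕ):ℚ) * w < ((M/w:ℕ):ℚ) * w := by
    rw [hsum, hq']
    nlinarith
  have h7 : ((kc.toNat * DMw + dMw : ℕ):ℚ) < ((M/w:ℕ):ℚ) :=
    lt_of_mul_lt_mul_right h6 hwpos.le
  have h8 : kc.toNat * DMw + dMw < M/w := by exact_mod_cast h7
  omega

lemma part3_arith {M w : ℕ} (hM : 0 < M) (hw : 0 < w) (hMq : w * (M/w) = M)
    {δ Δ : ℚ} {invΔ dMw DMw : ℕ} (hδ : 0 < δ) (hδΔ : δ < Δ) (hΔ1 : Δ ≤ 1)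
    (hinv : (invΔ:ℚ) = 1/Δ) (hdMw : (dMw:ℚ) = δ*(M:ℚ)/(w:ℚ)) (hDMw : (DMw:ℚ) = Δ*(M:ℚ)/(w:ℚ))
    {c : ℚ} (hc : ∃ k : ℤ, c = Δ*k) (hc0 : 0 < c) (hc1 : c ≤ 1) :
    ∃ e : ℕ, dMw ≤ e ∧ e ≤ M/w ∧ (c-δ)*M = ((e - dMw : ℕ):ℚ)*w ∧ c*M = (e:ℚ)*w := by
  obtain ⟨kc, hkc⟩ := hc
  have hΔ0 : (0:ℚ) < Δ := lt_trans hδ hδΔ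
  have hwpos : (0:ℚ) < w := by exact_mod_cast hw
  have hw0 : ((w:ℚ)) ≠ 0 := ne_of_gt hwpos
  have hMpos : (0:ℚ) < M := by exact_mod_cast hM
  have hMQ : (M:ℚ) = (w:ℚ) * ((M/w : ℕ):ℚ) := by exact_mod_cast hMq.symm
  have hq' : ((M/w : ℕ):ℚ) * w = M := by rw [mul_comm]; exact hMQ.symm
  have hk1 : 1 ≤ kc := by
    by_contra hneg
    push_neg at hneg
    have h0 : kc ≤ 0 := by omega
    have h1 : (kc:ℚ) ≤ 0 := by exact_mod_cast h0
    nlinarith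
  have hk0 : 0 ≤ kc := by omega
  have hkQ : ((kc.toNat : ℕ):ℚ) = (kc:ℚ) := by exact_mod_cast Int.toNat_of_nonneg hk0
  have hkQ1 : (1:ℚ) ≤ (kc:ℚ) := by exact_mod_cast hk1
  have hΔc : Δ ≤ c := by
    rw [hkc]
    nlinarith
  have hE : ((kc.toNat * DMw : ℕ):ℚ) * w = c * M := by
    push_cast
    rw [hkQ, hDMw, hkc]
    field_simp
  have hd : (dMw:ℚ) * w = δ * M := by rw [hdMw]; field_simp
  have hdE : dMw ≤ kc.toNat * DMw := by
    have h6 : (dMw:ℚ)*w < ((kc.toNat * DMw : ℕ):ℚ)*w := by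
      rw [hd, hE]
      nlinarith
    have h7 : (dMw:ℚ) < ((kc.toNat * DMw : ℕ):ℚ) := lt_of_mul_lt_mul_right h6 hwpos.le
    have h8 : dMw < kc.toNat * DMw := by exact_mod_cast h7
    omega
  have hEq : kc.toNat * DMw ≤ M/w := by
    have h6 : ((kc.toNat * DMw : ℕ):ℚ)*w ≤ ((M/w:ℕ):ℚ)*w := by
      rw [hE, hq']
      nlinarith
    have h7 : ((kc.toNat * DMw : ℕ):ℚ) ≤ ((M/w:ℕ):ℚ) := le_of_mul_le_mul_right h6 hwpos
    exact_mod_cast h7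
  refine ⟨kc.toNat * DMw, hdE, hEq, ?_, hE.symm⟩
  rw [Nat.cast_sub hdE]
  push_cast
  push_cast at hE
  linarith [hE, hd]


/-- Properties of lines in the near-orthogonal setting:
(1) every line has at most `M/w` points, each of the form `x + λ·j` with `|λ| ≤ 2M/w`,
and exactly `M/w` points when `x ∉ B`; (2),(3) for `x ∉ B`, each grid-aligned window of
width `δ` for `⟨·,j⟩ mod M` captures exactly `δ·M/w` points of the line. -/
theorem stmt_14 (n m M w : ℕ) (hn : 0 < n) (hm : 0 < m) (hM : 0 < M) (hw : 0 < w)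
    (hwM : w ∣ M) (h2Mw : 2 * (M / w) < n ^ 2)
    (j : Fin n → ℕ) (hj01 : ∀ i, j i ≤ 1) (hjw : ∑ i, j i = w) :
    (∀ x : Fin n → Fin m,
      (lineDir n m M j x).ncard ≤ M / w ∧
      (∀ y ∈ lineDir n m M j x, ∃ lam : ℤ, lam.natAbs ≤ 2 * (M / w) ∧
        ∀ i, ((y i : ℕ) : ℤ) = ((x i : ℕ) : ℤ) + lam * (j i : ℤ)) ∧
      (x ∉ boundarySet n m → (lineDir n m M j x).ncard = M / w)) ∧
    (∀ (δ Δ : ℚ) (invΔ dMw DMw : ℕ),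
      0 < δ → δ < Δ → Δ ≤ 1 →
      (invΔ : ℚ) = 1 / Δ → (dMw : ℚ) = δ * (M : ℚ) / (w : ℚ) →
      (DMw : ℚ) = Δ * (M : ℚ) / (w : ℚ) →
      ∀ x : Fin n → Fin m, x ∉ boundarySet n m →
        (∀ c : ℚ, (∃ k : ℤ, c = Δ * k) → 0 ≤ c → c < 1 →
          ({y | y ∈ lineDir n m M j x ∧ c * M ≤ ((ip y j % M : ℕ) : ℚ) ∧
            ((ip y j % M : ℕ) : ℚ) < (c + δ) * M}).ncard = dMw) ∧
        (∀ c : ℚ, (∃ k : ℤ, c = Δ * k) → 0 < c → c ≤ 1 →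
          ({y | y ∈ lineDir n m M j x ∧ (c - δ) * M ≤ ((ip y j % M : ℕ) : ℚ) ∧
            ((ip y j % M : ℕ) : ℚ) < c * M}).ncard = dMw)) := by
  have hMq : w * (M/w) = M := Nat.mul_div_cancel' hwM
  constructor
  · intro x
    refine ⟨line_card_le hM hw hwM hj01 hjw x, ?_, ?_⟩
    · intro y hy
      obtain ⟨⟨lam, hlam⟩, hfloor⟩ := hy
      have hb := lam_range hM hw hwM hj01 hjw hlam hfloor
      obtain ⟨hb1, hb2⟩ := hb
      have hs := (decomp hw hM hwM (ip x j)).2.2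
      have hpos : (0:ℤ) ≤ (((ip x j % M)/w : ℕ):ℤ) := Int.natCast_nonneg _
      exact ⟨lam, by omega, hlam⟩
    · intro hx
      obtain ⟨g, hg1, hg2, hg3⟩ := line_param hn hM hw hwM h2Mw hj01 hjw hx
      have hset : lineDir n m M j x = g '' (Set.Iio (M/w)) := by
        ext y
        constructor
        · intro hy
          obtain ⟨t, ht, rfl⟩ := hg3 y hy
          exact ⟨t, ht, rfl⟩
        · rintro ⟨t, ht, rfl⟩
          exact (hg1 t ht).1
      have hinj : Set.InjOn g (Set.Iio (M/w)) := fun t ht t' ht' h => hg2 t t' ht ht' h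
      rw [hset, Set.ncard_image_of_injOn hinj,
        ← Finset.coe_range, Set.ncard_coe_finset, Finset.card_range]
  · intro δ Δ invΔ dMw DMw hδ hδΔ hΔ1 hinv hdMw hDMw x hx
    constructor
    · intro c hc hc0 hc1
      obtain ⟨e, hfq, hlo, hhi⟩ :=
        part2_arith hM hw hMq hδ hδΔ hΔ1 hinv hdMw hDMw hc hc0 hc1
      have hcount := window_count hn hM hw hwM h2Mw hj01 hjw hx e (e + dMw) hfq
        (c*M) ((c+δ)*M) hlo hhi
      rw [hcount]
      omega
    · intro c hc hc0 hc1
      obtain ⟨e, hde, heq, hlo, hhi⟩ :=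
        part3_arith hM hw hMq hδ hδΔ hΔ1 hinv hdMw hDMw hc hc0 hc1
      have hcount := window_count hn hM hw hwM h2Mw hj01 hjw hx (e - dMw) e heq
        ((c-δ)*M) (c*M) hlo hhi
      rw [hcount]
      omega
end

section
/- Let n, m, M, w be positive integers with M/w < n², let ε, δ be rationals with 0 < ε < δ < 1, and let Δ ∈ (0,1] be rational. Let I ⊆ {0,1}^n be a finite set of vectors each with exactly w ones, let r ∈ {0,1}^n ∖ I have exactly w ones, and suppose ⟨r,u⟩ ≤ ε·w for every u ∈ I. Let a, b ∈ (Δ·ℤ ∩ [0,1])^I with a_u < b_u for all u ∈ I, and let R = Rect(I,a,b). Then for every integer λ with |λ| ≤ M/w and every x ∈ Int_δ(R), the point x + λ·r lies in R (in particular it lies in [m]^n). -/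
/-- The rectangle `Rect(I,c,d) = {y ∈ [m]^n : c_u·M ≤ ⟨y,u⟩ mod M < d_u·M for all u ∈ I}`. -/
def rectSet (n m M : ℕ) (I : Finset (Fin n → ℕ)) (c d : (Fin n → ℕ) → ℚ) :
    Set (Fin n → Fin m) :=
  {y | ∀ u ∈ I, c u * M ≤ ((ip y u % M : ℕ) : ℚ) ∧ ((ip y u % M : ℕ) : ℚ) < d u * M}

/-- Membership of a rational in `Δ·ℤ ∩ [0,1]`. -/
def gridPt (Δ q : ℚ) : Prop := (∃ k : ℤ, q = Δ * k) ∧ 0 ≤ q ∧ q ≤ 1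

/-- The `δ`-interior `Int_δ(Rect(I,c,d)) = {y ∈ [m]^n ∖ B :
(c_u+δ)·M ≤ ⟨y,u⟩ mod M < (d_u−δ)·M for all u ∈ I}`. -/
def interiorSet (n m M : ℕ) (δ : ℚ) (I : Finset (Fin n → ℕ)) (c d : (Fin n → ℕ) → ℚ) :
    Set (Fin n → Fin m) :=
  {y | y ∉ boundarySet n m ∧
    ∀ u ∈ I, (c u + δ) * M ≤ ((ip y u % M : ℕ) : ℚ) ∧
      ((ip y u % M : ℕ) : ℚ) < (d u - δ) * M}

/-- If `r` is a weight-`w` `0/1`-vector, `r ∉ I`, with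
`⟨r,u⟩ ≤ εw` for every `u ∈ I` and `ε < δ`, then shifting any point of the `δ`-interior
of the rectangle `R = Rect(I,a,b)` by `λ·r` with `|λ| ≤ M/w` stays inside `R`
(in particular inside `[m]^n`). -/
theorem stmt_15 (n m M w : ℕ) (hn : 0 < n) (hm : 0 < m) (hM : 0 < M) (hw : 0 < w)
    (hMwn : M < n ^ 2 * w)
    (ε δ Δ : ℚ) (hε0 : 0 < ε) (hεδ : ε < δ) (hδ1 : δ < 1) (hΔ0 : 0 < Δ) (hΔ1 : Δ ≤ 1)
    (I : Finset (Fin n → ℕ)) (hI01 : ∀ u ∈ I, ∀ i, u i ≤ 1) (hIw : ∀ u ∈ I, ∑ i, u i = w)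
    (r : Fin n → ℕ) (hr01 : ∀ i, r i ≤ 1) (hrw : ∑ i, r i = w) (hrI : r ∉ I)
    (hru : ∀ u ∈ I, ((∑ i, r i * u i : ℕ) : ℚ) ≤ ε * (w : ℚ))
    (a b : (Fin n → ℕ) → ℚ)
    (hab : ∀ u ∈ I, gridPt Δ (a u) ∧ gridPt Δ (b u) ∧ a u < b u) :
    ∀ lam : ℤ, lam.natAbs * w ≤ M →
      ∀ x ∈ interiorSet n m M δ I a b,
        ∃ y ∈ rectSet n m M I a b,
          ∀ i, ((y i : ℕ) : ℤ) = ((x i : ℕ) : ℤ) + lam * (r i : ℤ) := by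

  intro lam hlam x hx
  obtain ⟨hxB, hxI⟩ := hx
  have hlamlt : lam.natAbs < n ^ 2 := by
    by_contra h
    push_neg at h
    have h2 : n ^ 2 * w ≤ lam.natAbs * w := Nat.mul_le_mul_right w h
    omega
  -- coordinatewise bounds
  have hcoord : ∀ i : Fin n, 0 ≤ ((x i : ℕ) : ℤ) + lam * (r i : ℤ) ∧
      ((x i : ℕ) : ℤ) + lam * (r i : ℤ) < m := by
    intro i
    have h1 : ¬ ((x i : ℕ) < n ^ 2 ∨ m - n ^ 2 < (x i : ℕ)) := fun h => hxB ⟨i, h⟩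
    push_neg at h1
    have hxm : (x i : ℕ) < m := (x i).isLt
    have hri : r i = 0 ∨ r i = 1 := by have := hr01 i; omega
    rcases hri with hri | hri <;> simp [hri] <;> omega
  refine ⟨fun i => ⟨(((x i : ℕ) : ℤ) + lam * (r i : ℤ)).toNat, ?_⟩, ?_, ?_⟩
  · have := hcoord i
    omega
  · -- rectangle membership
    intro u hu
    set y : Fin n → Fin m := fun i => ⟨(((x i : ℕ) : ℤ) + lam * (r i : ℤ)).toNat, by
      have := hcoord i; omega⟩ with hy
    have hyeq : ∀ i, ((y i : ℕ) : ℤ) = ((x i : ℕ) : ℤ) + lam * (r i : ℤ) := by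
      intro i
      simp only [hy]
      exact Int.toNat_of_nonneg (hcoord i).1
    have hyip : (ip y u : ℤ) = (ip x u : ℤ) + lam * ((∑ i, r i * u i : ℕ) : ℤ) := by
      simp only [ip]
      push_cast
      rw [Finset.mul_sum, ← Finset.sum_add_distrib]
      refine Finset.sum_congr rfl fun i _ => ?_
      rw [hyeq i]; ring
    set s : ℕ := ∑ i, r i * u i with hs
    set A : ℤ := ((ip x u % M : ℕ) : ℤ) with hA
    have hAQ : ((A : ℤ) : ℚ) = ((ip x u % M : ℕ) : ℚ) := by rw [hA]; exact Int.cast_natCast _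
    have h2 : (ip x u : ℤ) % M = A := by rw [hA, Int.natCast_mod]
    obtain ⟨hlo, hhi⟩ := hxI u hu
    obtain ⟨⟨_, ha0, _⟩, ⟨_, _, hb1⟩, habL⟩ := hab u hu
    have hsε : ((s : ℕ) : ℚ) ≤ ε * w := hru u hu
    clear_value y s A
    clear hy hs hA hxI hab hxB
    -- bound on the shift t = lam * s
    have habs : |(lam : ℚ) * (s : ℚ)| ≤ ε * M := by
      have hcabs : ((lam.natAbs : ℚ)) = |(lam : ℚ)| := by
        rw [Nat.cast_natAbs, Int.cast_abs]
      rw [abs_mul, abs_of_nonneg (by positivity : (0:ℚ) ≤ (s : ℚ)), ← hcabs]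
      have h2 : (lam.natAbs : ℚ) * w ≤ (M : ℚ) := by exact_mod_cast hlam
      nlinarith [mul_le_mul_of_nonneg_left hsε (Nat.cast_nonneg (α := ℚ) lam.natAbs),
        mul_le_mul_of_nonneg_left h2 hε0.le]
    have hMQ : (0 : ℚ) < M := by exact_mod_cast hM
    obtain ⟨habs1, habs2⟩ := abs_le.mp habs
    have hδε : (0 : ℚ) ≤ (δ - ε) * M := mul_nonneg (by linarith) hMQ.le
    have hlo' : a u * M ≤ ((A : ℤ) : ℚ) + (lam : ℚ) * s := by
      rw [hAQ]; linarith
    have hhi' : ((A : ℤ) : ℚ) + (lam : ℚ) * s < b u * M := by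
      rw [hAQ]; linarith
    have h0le : 0 ≤ A + lam * (s : ℤ) := by
      have hq : (0 : ℚ) ≤ ((A : ℤ) : ℚ) + (lam : ℚ) * s := by
        have := mul_nonneg ha0 hMQ.le; linarith
      exact_mod_cast hq
    have hltM : A + lam * (s : ℤ) < M := by
      have hq : ((A : ℤ) : ℚ) + (lam : ℚ) * s < (M : ℚ) := by
        have : (0 : ℚ) ≤ (1 - b u) * M := mul_nonneg (by linarith) hMQ.le
        linarith
      exact_mod_cast hq
    -- compute the new residue
    have hmod : ((ip y u % M : ℕ) : ℤ) = A + lam * (s : ℤ) := by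
      rw [Int.natCast_mod, hyip, ← Int.emod_add_emod, h2]
      exact Int.emod_eq_of_lt h0le hltM
    have hfin : ((ip y u % M : ℕ) : ℚ) = ((A : ℤ) : ℚ) + (lam : ℚ) * s := by
      rw [show ((ip y u % M : ℕ) : ℚ) = (((ip y u % M : ℕ) : ℤ) : ℚ) from
        (Int.cast_natCast _).symm, hmod]
      push_cast
      ring
    exact ⟨by rw [hfin]; exact hlo', by rw [hfin]; exact hhi'⟩
  · intro i
    exact Int.toNat_of_nonneg (hcoord i).1
end

section
/- Let n, m, M, W, w, α be positive integers with α ≥ 2, w ∣ W, W ∣ M, α ∣ (W/w), and M/w ≤ n², and let r ∈ {0,1}^n have exactly w ones. Define the (α,r)-densifying map ρ on [m]^n ∖ B as follows: writing ⟨x,r⟩ mod M = a·W + b·(W/α) + c with a ∈ [M/W], b ∈ [α], c ∈ [W/α], set ρ(x) = x − ((W/w)·(1 − 1/α)·a + (W/(α·w))·b)·r. Then: (1) ρ is injective on {x ∈ [m]^n ∖ B : wt(x) mod W < W/α}; (2) for every x ∈ [m]^n ∖ B, ρ(x) ∈ [m]^n and ρ(x) = x + λ·r for some integer λ with |λ|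 ≤ M/w; and (3) if moreover ε, δ are rationals with 0 < ε < δ < 1, Δ ∈ (0,1] is rational, I ⊆ {0,1}^n is a finite set of vectors each with exactly w ones such that r ∉ I and ⟨r,u⟩ ≤ ε·w for all u ∈ I, and a', b' ∈ (Δ·ℤ ∩ [0,1])^I satisfy a'_u < b'_u for all u ∈ I, then, with U = Rect(I,a',b'), ρ maps {x ∈ Int_δ(U) : wt(x) mod W < W/α} into {x ∈ U : ⟨x,r⟩ mod M < M/α}. -/
/-- The `(α,r)`-densifying map `ρ`: writing `⟨x,r⟩ mod M = a·W + b·(W/α) + c` with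
`a ∈ [M/W]`, `b ∈ [α]`, `c ∈ [W/α]`, one sets
`ρ(x) = x − ((W/w)·(1 − 1/α)·a + (W/(α·w))·b)·r`.  (The subtraction on each
coordinate is truncated `ℕ`-subtraction; under the hypotheses of the theorem below no
truncation occurs for non-boundary points, as asserted in part (2).) -/
def rhoMap (n m M W w alpha : ℕ) (r : Fin n → ℕ) (x : Fin n → Fin m) :
    Fin n → Fin m := fun i =>
  let p : ℕ := (∑ j, (x j : ℕ) * r j) % M
  let a : ℕ := p / W
  let b : ℕ := p % W / (W / alpha)
  let shift : ℕ := (W / w - W / (alpha * w)) * a + W / (alpha * w) * b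
  ⟨(x i : ℕ) - shift * r i, lt_of_le_of_lt (Nat.sub_le _ _) (x i).isLt⟩

lemma natmod_eq {N Mo : ℕ} {q v : ℤ} (h : (N:ℤ) = q * Mo + v) (h0 : 0 ≤ v) (h1 : v < (Mo:ℤ)) :
    ((N % Mo : ℕ) : ℤ) = v := by
  have hc : ((N % Mo : ℕ) : ℤ) = (N : ℤ) % (Mo:ℤ) := by push_cast; ring
  rw [hc, h, add_comm, Int.add_mul_emod_self_right, Int.emod_eq_of_lt h0 h1]

def Pf {n m : ℕ} (M : ℕ) (r : Fin n → ℕ) (x : Fin n → Fin m) : ℕ :=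
  (∑ j, (x j : ℕ) * r j) % M
def Af {n m : ℕ} (M W : ℕ) (r : Fin n → ℕ) (x : Fin n → Fin m) : ℕ := Pf M r x / W
def Bf {n m : ℕ} (M W alpha : ℕ) (r : Fin n → ℕ) (x : Fin n → Fin m) : ℕ :=
  Pf M r x % W / (W / alpha)
def Cf {n m : ℕ} (M W alpha : ℕ) (r : Fin n → ℕ) (x : Fin n → Fin m) : ℕ :=
  Pf M r x % W % (W / alpha)
def shf {n m : ℕ} (M W w alpha : ℕ) (r : Fin n → ℕ) (x : Fin n → Fin m) : ℕ :=
  (W / w - W / (alpha * w)) * Af M W r x + W / (alpha * w) * Bf M W alpha r x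

lemma rho_apply {n m : ℕ} (M W w alpha : ℕ) (r : Fin n → ℕ) (x : Fin n → Fin m) (i : Fin n) :
    (rhoMap n m M W w alpha r x i : ℕ) = (x i : ℕ) - shf M W w alpha r x * r i := rfl

lemma div_unique_nat {a c a' c' V : ℕ} (h : a * V + c = a' * V + c') (hc : c < V) (hc' : c' < V) :
    a = a' ∧ c = c' := by
  have ha : a = a' := by
    rcases lt_trichotomy a a' with h1|h1|h1
    · have h2 : a + 1 ≤ a' := h1
      nlinarith [Nat.mul_le_mul_right V h2]
    · exact h1
    · have h2 : a' + 1 ≤ a := h1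
      nlinarith [Nat.mul_le_mul_right V h2]
  subst ha
  exact ⟨rfl, by omega⟩

lemma div_unique_int {s s' d d' V : ℤ} (h : s + d*V = s' + d'*V)
    (hs0 : 0 ≤ s) (hs : s < V) (hs0' : 0 ≤ s') (hs' : s' < V)
    (hd0 : 0 ≤ d) (hd0' : 0 ≤ d') : s = s' ∧ d = d' := by
  have hd : d = d' := by
    rcases lt_trichotomy d d' with h1|h1|h1
    · have h2 : d + 1 ≤ d' := h1
      nlinarith
    · exact h1
    · have h2 : d' + 1 ≤ d := h1
      nlinarith
  subst hd
  exact ⟨by linarith, rfl⟩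

lemma int_eq_of_dvd_lt {z al : ℤ} (hal : 0 < al) (hd : al ∣ z) (h1 : -al < z) (h2 : z < al) :
    z = 0 := by
  obtain ⟨c, rfl⟩ := hd
  rcases lt_trichotomy c 0 with h|h|h
  · nlinarith
  · simp [h]
  · nlinarith

set_option maxHeartbeats 1000000 in
/-- Properties of the `(α,r)`-densifying map: (1) it is injective on
`{x ∈ [m]^n ∖ B : wt(x) mod W < W/α}`; (2) for every `x ∈ [m]^n ∖ B`,
`ρ(x) = x + λ·r` for some integer `λ` with `|λ| ≤ M/w`; (3) it maps the weight-subsampled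
`δ`-interior of a near-orthogonal rectangle `U = Rect(I,a',b')` (with `r ∉ I`,
`⟨r,u⟩ ≤ εw` for `u ∈ I`) into `{x ∈ U : ⟨x,r⟩ mod M < M/α}`. -/
theorem stmt_19 (n m M W w alpha : ℕ)
    (hn : 0 < n) (hm : 0 < m) (hM : 0 < M) (hW : 0 < W) (hw : 0 < w)
    (halpha : 2 ≤ alpha) (hwW : w ∣ W) (hWM : W ∣ M) (haWw : alpha ∣ W / w)
    (hMwn : M ≤ n ^ 2 * w)
    (r : Fin n → ℕ) (hr01 : ∀ i, r i ≤ 1) (hrw : ∑ i, r i = w) :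
    Set.InjOn (rhoMap n m M W w alpha r)
      {x : Fin n → Fin m | x ∉ boundarySet n m ∧ wt x % W < W / alpha} ∧
    (∀ x : Fin n → Fin m, x ∉ boundarySet n m →
      ∃ lam : ℤ, lam.natAbs * w ≤ M ∧
        ∀ i, ((rhoMap n m M W w alpha r x i : ℕ) : ℤ) =
          ((x i : ℕ) : ℤ) + lam * (r i : ℤ)) ∧
    (∀ ε δ Δ : ℚ, 0 < ε → ε < δ → δ < 1 → 0 < Δ → Δ ≤ 1 →
      ∀ I : Finset (Fin n → ℕ),
        (∀ u ∈ I, ∀ i, u i ≤ 1) → (∀ u ∈ I, ∑ i, u i = w) →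
        r ∉ I → (∀ u ∈ I, ((∑ i, r i * u i : ℕ) : ℚ) ≤ ε * (w : ℚ)) →
        ∀ a b : (Fin n → ℕ) → ℚ,
          (∀ u ∈ I, gridPt Δ (a u) ∧ gridPt Δ (b u) ∧ a u < b u) →
          ∀ x : Fin n → Fin m,
            x ∈ interiorSet n m M δ I a b → wt x % W < W / alpha →
            rhoMap n m M W w alpha r x ∈ rectSet n m M I a b ∧
            ip (rhoMap n m M W w alpha r x) r % M < M / alpha) := by
  have halphapos : 0 < alpha := by omega
  obtain ⟨t, ht0⟩ := haWw
  have h1 : W / w * w = W := Nat.div_mul_cancel hwW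
  rw [ht0] at h1
  -- h1 : alpha * t * w = W
  obtain ⟨Q, hMQ⟩ := hWM
  set V : ℕ := w * t with hVdef
  have hWV : W = alpha * V := by rw [← h1, hVdef]; ring
  have htpos : 0 < t := by
    rcases Nat.eq_zero_or_pos t with h|h
    · subst h; simp at h1; omega
    · exact h
  have hVpos : 0 < V := by positivity
  have hQpos : 0 < Q := by
    rcases Nat.eq_zero_or_pos Q with h|h
    · subst h; simp at hMQ; omega
    · exact h
  have hMfac : M = alpha * (V * Q) := by rw [hMQ, hWV]; ring
  have hdivWalpha : W / alpha = V := by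
    rw [hWV]; exact Nat.mul_div_cancel_left _ halphapos
  have hdivWaw : W / (alpha * w) = t := by
    have h2 : W = (alpha * w) * t := by rw [hWV, hVdef]; ring
    rw [h2]; exact Nat.mul_div_cancel_left _ (by positivity)
  have hdivMalpha : M / alpha = V * Q := by
    rw [hMfac]; exact Nat.mul_div_cancel_left _ halphapos
  obtain ⟨a1, ha1⟩ : ∃ a1, alpha = a1 + 1 := ⟨alpha - 1, by omega⟩
  have hPlt : ∀ x : Fin n → Fin m, Pf M r x < M := fun x => Nat.mod_lt _ hM
  have hAlt : ∀ x : Fin n → Fin m, Af M W r x < Q := by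
    intro x
    have h2 : Pf M r x < W * Q := by rw [← hMQ]; exact hPlt x
    exact Nat.div_lt_of_lt_mul h2
  have hBlt : ∀ x : Fin n → Fin m, Bf M W alpha r x < alpha := by
    intro x
    have h2 : Pf M r x % W < V * alpha := by
      rw [mul_comm, ← hWV]; exact Nat.mod_lt _ hW
    unfold Bf
    rw [hdivWalpha]
    exact Nat.div_lt_of_lt_mul h2
  have hClt : ∀ x : Fin n → Fin m, Cf M W alpha r x < V := by
    intro x; unfold Cf; rw [hdivWalpha]; exact Nat.mod_lt _ hVpos
  have hsh_eq : ∀ x : Fin n → Fin m,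
      shf M W w alpha r x = a1 * t * Af M W r x + t * Bf M W alpha r x := by
    intro x
    have h3 : W / w - W / (alpha * w) = a1 * t := by
      rw [ht0, hdivWaw, ha1, add_mul, one_mul, Nat.add_sub_cancel]
    unfold shf
    rw [h3, hdivWaw]
  have hPdecomp : ∀ x : Fin n → Fin m,
      Pf M r x = Af M W r x * W + Bf M W alpha r x * V + Cf M W alpha r x := by
    intro x
    have h2 : W * (Pf M r x / W) + Pf M r x % W = Pf M r x := Nat.div_add_mod _ _
    have h3 : V * (Pf M r x % W / V) + Pf M r x % W % V = Pf M r x % W := Nat.div_add_mod _ _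
    unfold Af Bf Cf
    rw [hdivWalpha]
    linarith only [h2, h3]
  have hshw : ∀ x : Fin n → Fin m,
      shf M W w alpha r x * w + (Af M W r x * V + Cf M W alpha r x) = Pf M r x := by
    intro x
    rw [hsh_eq, hPdecomp x, hWV, ha1, hVdef]
    ring
  have hshM : ∀ x : Fin n → Fin m, shf M W w alpha r x * w ≤ M :=
    fun x => le_trans (Nat.le.intro (hshw x)) (le_of_lt (hPlt x))
  have hsh_n2 : ∀ x : Fin n → Fin m, shf M W w alpha r x ≤ n ^ 2 :=
    fun x => Nat.le_of_mul_le_mul_right (le_trans (hshM x) hMwn) hw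
  have hxlb : ∀ x : Fin n → Fin m, x ∉ boundarySet n m → ∀ i, n ^ 2 ≤ (x i : ℕ) := by
    intro x hx i
    by_contra h
    exact hx ⟨i, Or.inl (by omega)⟩
  have htrunc : ∀ x : Fin n → Fin m, x ∉ boundarySet n m → ∀ i,
      shf M W w alpha r x * r i ≤ (x i : ℕ) := by
    intro x hx i
    calc shf M W w alpha r x * r i ≤ shf M W w alpha r x * 1 :=
          Nat.mul_le_mul_left _ (hr01 i)
    _ = shf M W w alpha r x := mul_one _
    _ ≤ n ^ 2 := hsh_n2 x
    _ ≤ (x i : ℕ) := hxlb x hx i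
  have hyi : ∀ x : Fin n → Fin m, x ∉ boundarySet n m → ∀ i,
      ((rhoMap n m M W w alpha r x i : ℕ) : ℤ) = ((x i : ℕ) : ℤ)
        - shf M W w alpha r x * r i := by
    intro x hx i
    rw [rho_apply]
    push_cast [htrunc x hx i]
    ring
  have hrr : ∀ i, r i * r i = r i := by
    intro i; have := hr01 i; interval_cases (r i) <;> rfl
  have hipy_gen : ∀ x : Fin n → Fin m, x ∉ boundarySet n m → ∀ u : Fin n → ℕ,
      (ip (rhoMap n m M W w alpha r x) u : ℤ)
        = (ip x u : ℤ) - shf M W w alpha r x * ((∑ i, (r i * u i : ℕ) : ℕ) : ℤ) := by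
    intro x hx u
    unfold ip
    push_cast
    rw [Finset.mul_sum, ← Finset.sum_sub_distrib]
    refine Finset.sum_congr rfl fun i _ => ?_
    rw [hyi x hx i]
    ring
  have hipyr : ∀ x : Fin n → Fin m, x ∉ boundarySet n m →
      (ip (rhoMap n m M W w alpha r x) r : ℤ) = (ip x r : ℤ) - shf M W w alpha r x * w := by
    intro x hx
    rw [hipy_gen x hx r]
    have h2 : (∑ i, r i * r i) = w := (Finset.sum_congr rfl fun i _ => hrr i).trans hrw
    rw [h2]
  have hwty : ∀ x : Fin n → Fin m, x ∉ boundarySet n m →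
      (wt (rhoMap n m M W w alpha r x) : ℤ) = (wt x : ℤ) - shf M W w alpha r x * w := by
    intro x hx
    have hrwZ : (∑ i, ((r i : ℕ) : ℤ)) = (w : ℤ) := by exact_mod_cast hrw
    unfold wt
    push_cast
    rw [Finset.sum_congr rfl fun i _ => hyi x hx i, Finset.sum_sub_distrib,
      ← Finset.mul_sum, hrwZ]
  -- values of ip (rho x) r mod M
  have hPy : ∀ x : Fin n → Fin m, x ∉ boundarySet n m →
      ((ip (rhoMap n m M W w alpha r x) r % M : ℕ) : ℤ)
        = (Af M W r x : ℤ) * V + (Cf M W alpha r x : ℤ) := by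
    intro x hx
    have e1 := hipyr x hx
    have e2 : (M:ℤ) * ((ip x r / M : ℕ) : ℤ) + ((ip x r % M : ℕ) : ℤ) = (ip x r : ℤ) := by
      exact_mod_cast Nat.div_add_mod (ip x r) M
    have e3 : (shf M W w alpha r x : ℤ) * w
        + ((Af M W r x : ℤ) * V + (Cf M W alpha r x : ℤ)) = ((ip x r % M : ℕ) : ℤ) := by
      exact_mod_cast hshw x
    have hAZ : (Af M W r x : ℤ) < Q := by exact_mod_cast hAlt x
    have hCZ : (Cf M W alpha r x : ℤ) < V := by exact_mod_cast hClt x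
    refine natmod_eq (q := ((ip x r / M : ℕ) : ℤ)) (by linarith only [e1, e2, e3]) (by positivity) ?_
    have hMZ : (M:ℤ) = (alpha:ℤ) * ((V:ℤ) * Q) := by exact_mod_cast hMfac
    have hal2 : (2:ℤ) ≤ alpha := by exact_mod_cast halpha
    have hV0 : (0:ℤ) < (V:ℤ) := by exact_mod_cast hVpos
    have hA1 : (Af M W r x : ℤ) + 1 ≤ Q := hAZ
    have h4 : (Af M W r x : ℤ) * V + (Cf M W alpha r x : ℤ) < (V:ℤ) * Q := by
      nlinarith only [mul_le_mul_of_nonneg_right hA1 hV0.le, hCZ]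
    have h5 : (V:ℤ) * Q ≤ (M:ℤ) := by
      have hVQ0 : (0:ℤ) ≤ (V:ℤ) * Q := by positivity
      nlinarith only [mul_le_mul_of_nonneg_right (show (1:ℤ) ≤ (alpha:ℤ) by linarith only [hal2]) hVQ0, hMZ]
    linarith
  have hPyltQV : ∀ x : Fin n → Fin m, x ∉ boundarySet n m →
      ip (rhoMap n m M W w alpha r x) r % M < V * Q := by
    intro x hx
    have h2 := hPy x hx
    have hAZ : (Af M W r x : ℤ) < Q := by exact_mod_cast hAlt x
    have hCZ : (Cf M W alpha r x : ℤ) < V := by exact_mod_cast hClt x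
    have hVZ : (0:ℤ) < (V:ℤ) := by exact_mod_cast hVpos
    have : ((ip (rhoMap n m M W w alpha r x) r % M : ℕ) : ℤ) < (V:ℤ) * Q := by
      rw [h2]
      have hA1 : (Af M W r x : ℤ) + 1 ≤ Q := hAZ
      nlinarith only [mul_le_mul_of_nonneg_right hA1 hVZ.le, hCZ]
    exact_mod_cast this
  -- value of wt (rho x) mod W
  have hwy : ∀ x : Fin n → Fin m, x ∉ boundarySet n m → wt x % W < V →
      ((wt (rhoMap n m M W w alpha r x) % W : ℕ) : ℤ)
        = ((wt x % W : ℕ) : ℤ)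
          + (((Af M W r x : ℤ) - (Bf M W alpha r x : ℤ)) % alpha) * V := by
    intro x hx hs
    have halZ : (0:ℤ) < (alpha:ℤ) := by exact_mod_cast halphapos
    set dd : ℤ := ((Af M W r x : ℤ) - (Bf M W alpha r x : ℤ)) % alpha with hdd
    set ee : ℤ := ((Af M W r x : ℤ) - (Bf M W alpha r x : ℤ)) / alpha with hee
    have hd0 : 0 ≤ dd := Int.emod_nonneg _ (by omega)
    have hdlt : dd < alpha := Int.emod_lt_of_pos _ halZ
    have hED : (Af M W r x : ℤ) - (Bf M W alpha r x : ℤ) = alpha * ee + dd :=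
      (Int.mul_ediv_add_emod _ _).symm
    have e1 := hwty x hx
    have e2 : (W:ℤ) * ((wt x / W : ℕ) : ℤ) + ((wt x % W : ℕ) : ℤ) = (wt x : ℤ) := by
      exact_mod_cast Nat.div_add_mod (wt x) W
    have hshZ : (shf M W w alpha r x : ℤ)
        = (a1:ℤ) * t * (Af M W r x : ℤ) + (t:ℤ) * (Bf M W alpha r x : ℤ) := by
      exact_mod_cast hsh_eq x
    have hWZ : (W:ℤ) = ((a1:ℤ) + 1) * ((w:ℤ) * t) := by
      rw [hWV, ha1, hVdef]; push_cast; ring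
    have hVZ : (V:ℤ) = (w:ℤ) * t := by rw [hVdef]; push_cast; ring
    have halZ2 : (alpha:ℤ) = (a1:ℤ) + 1 := by exact_mod_cast ha1
    have hsZ : ((wt x % W : ℕ) : ℤ) < V := by exact_mod_cast hs
    have hVpos' : (0:ℤ) < (V:ℤ) := by exact_mod_cast hVpos
    refine natmod_eq (q := ((wt x / W : ℕ) : ℤ) - (Af M W r x : ℤ) + ee) ?_ (by positivity) ?_
    · rw [e1, hshZ]
      rw [hWZ] at e2
      rw [hWZ, hVZ]
      rw [halZ2] at hED
      linear_combination ((w:ℤ) * t) * hED - e2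
    · -- s + dd*V < W
      have hWVZ : (W:ℤ) = (alpha:ℤ) * (V:ℤ) := by exact_mod_cast hWV
      have hdd1 : dd ≤ (alpha:ℤ) - 1 := by omega
      have h9 : dd * V ≤ ((alpha:ℤ) - 1) * (V:ℤ) :=
        mul_le_mul_of_nonneg_right hdd1 hVpos'.le
      linarith only [hsZ, h9, hVpos', hWVZ]
  refine ⟨?_, ?_, ?_⟩
  · -- injectivity
    intro x hx x' hx' heq
    obtain ⟨hxB, hxs⟩ := hx
    obtain ⟨hxB', hxs'⟩ := hx'
    rw [hdivWalpha] at hxs hxs'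
    have hyP := hPy x hxB
    have hyP' := hPy x' hxB'
    rw [heq] at hyP
    have hACnat : Af M W r x * V + Cf M W alpha r x
        = Af M W r x' * V + Cf M W alpha r x' := by
      have h2 : (Af M W r x : ℤ) * V + (Cf M W alpha r x : ℤ)
          = (Af M W r x' : ℤ) * V + (Cf M W alpha r x' : ℤ) := by rw [← hyP, ← hyP']
      exact_mod_cast h2
    obtain ⟨hAeq, _⟩ := div_unique_nat hACnat (hClt x) (hClt x')
    have hyW := hwy x hxB hxs
    have hyW' := hwy x' hxB' hxs'
    rw [heq] at hyW
    have halZ : (0:ℤ) < (alpha:ℤ) := by exact_mod_cast halphapos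
    have hVpos' : (0:ℤ) < (V:ℤ) := by exact_mod_cast hVpos
    have hEq : ((wt x % W : ℕ) : ℤ)
        + (((Af M W r x : ℤ) - (Bf M W alpha r x : ℤ)) % alpha) * V
        = ((wt x' % W : ℕ) : ℤ)
          + (((Af M W r x' : ℤ) - (Bf M W alpha r x' : ℤ)) % alpha) * V := by
      rw [← hyW, ← hyW']
    obtain ⟨_, hdeq⟩ := div_unique_int hEq
      (by positivity) (by exact_mod_cast hxs) (by positivity) (by exact_mod_cast hxs')
      (Int.emod_nonneg _ (by omega)) (Int.emod_nonneg _ (by omega))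
    have hBeq : Bf M W alpha r x = Bf M W alpha r x' := by
      have hAeqZ : (Af M W r x : ℤ) = (Af M W r x' : ℤ) := by exact_mod_cast hAeq
      rw [hAeqZ] at hdeq
      have hmeq : Int.ModEq (alpha:ℤ) ((Af M W r x' : ℤ) - (Bf M W alpha r x : ℤ))
          ((Af M W r x' : ℤ) - (Bf M W alpha r x' : ℤ)) := hdeq
      have hdvd := Int.ModEq.dvd hmeq
      have hBZ : (Bf M W alpha r x : ℤ) < alpha := by exact_mod_cast hBlt x
      have hBZ' : (Bf M W alpha r x' : ℤ) < alpha := by exact_mod_cast hBlt x'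
      have h0 : ((Af M W r x' : ℤ) - (Bf M W alpha r x' : ℤ))
          - ((Af M W r x' : ℤ) - (Bf M W alpha r x : ℤ)) = 0 := by
        refine int_eq_of_dvd_lt halZ hdvd ?_ ?_
        · have h2 : (0:ℤ) ≤ (Bf M W alpha r x' : ℤ) := by positivity
          have h3 : (0:ℤ) ≤ (Bf M W alpha r x : ℤ) := by positivity
          linarith only [h2, h3, hBZ, hBZ']
        · have h2 : (0:ℤ) ≤ (Bf M W alpha r x' : ℤ) := by positivity
          have h3 : (0:ℤ) ≤ (Bf M W alpha r x : ℤ) := by positivity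
          linarith only [h2, h3, hBZ, hBZ']
      have : (Bf M W alpha r x : ℤ) = (Bf M W alpha r x' : ℤ) := by linarith only [h0]
      exact_mod_cast this
    have hsheq : shf M W w alpha r x = shf M W w alpha r x' := by
      rw [hsh_eq, hsh_eq, hAeq, hBeq]
    funext i
    have h6 := hyi x hxB i
    have h7 := hyi x' hxB' i
    rw [heq] at h6
    have h8 : ((x i : ℕ) : ℤ) = ((x' i : ℕ) : ℤ) := by
      rw [hsheq] at h6
      have hreq : ((r i : ℕ) : ℤ) = (r i : ℤ) := rfl
      linarith only [h6, h7]
    exact Fin.ext (by exact_mod_cast h8)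
  · -- part 2
    intro x hx
    refine ⟨-(shf M W w alpha r x : ℤ), ?_, ?_⟩
    · simpa using hshM x
    · intro i
      rw [hyi x hx i]
      ring
  · -- part 3
    intro ε δ Δ hε hεδ hδ1 hΔ hΔ1 I hI01 hIw hrI hIεw a b hab x hxInt hxwt
    obtain ⟨hxB, hbounds⟩ := hxInt
    constructor
    · intro u hu
      have hgε : ((∑ i, r i * u i : ℕ) : ℚ) ≤ ε * w := hIεw u hu
      have hshQ : ((shf M W w alpha r x : ℕ) : ℚ) * w ≤ (M:ℚ) := by
        exact_mod_cast hshM x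
      have hsh0 : (0:ℚ) ≤ ((shf M W w alpha r x : ℕ) : ℚ) := by positivity
      have hshg : ((shf M W w alpha r x : ℕ) : ℚ) * ((∑ i, r i * u i : ℕ) : ℚ) ≤ ε * M := by
        nlinarith only [mul_le_mul_of_nonneg_left hgε hsh0, hε.le, hshQ, hsh0, hgε]
      obtain ⟨hb1, hb2⟩ := hbounds u hu
      have ha0 : 0 ≤ a u := (hab u hu).1.2.1
      have hM1 : (1:ℚ) ≤ (M:ℚ) := by exact_mod_cast hM
      have hM0 : (0:ℚ) ≤ (M:ℚ) := by positivity
      have h9 : ε * (M:ℚ) < δ * M := by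
        have h91 := mul_le_mul_of_nonneg_left hM1 (le_of_lt (sub_pos.mpr hεδ))
        linarith only [h91, hεδ]
      have h10 : δ * (M:ℚ) ≤ (a u + δ) * M :=
        mul_le_mul_of_nonneg_right (by linarith only [ha0]) hM0
      have hlt : ((shf M W w alpha r x * (∑ i, r i * u i) : ℕ) : ℚ)
          < ((ip x u % M : ℕ) : ℚ) := by
        rw [Nat.cast_mul]
        linarith only [hshg, hb1, h9, h10]
      have hltN : shf M W w alpha r x * (∑ i, r i * u i) < ip x u % M := by
        exact_mod_cast hlt
      have e1 := hipy_gen x hxB u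
      have e2 : (M:ℤ) * ((ip x u / M : ℕ) : ℤ) + ((ip x u % M : ℕ) : ℤ) = (ip x u : ℤ) := by
        exact_mod_cast Nat.div_add_mod (ip x u) M
      have hmodlt : ip x u % M < M := Nat.mod_lt _ hM
      have hval : ((ip (rhoMap n m M W w alpha r x) u % M : ℕ) : ℤ)
          = ((ip x u % M : ℕ) : ℤ)
            - (shf M W w alpha r x : ℤ) * ((∑ i, r i * u i : ℕ) : ℤ) := by
        refine natmod_eq (q := ((ip x u / M : ℕ) : ℤ)) (by linarith only [e1, e2]) ?_ ?_
        · have h13 : ((shf M W w alpha r x * (∑ i, r i * u i) : ℕ) : ℤ)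
              < ((ip x u % M : ℕ) : ℤ) := by exact_mod_cast hltN
          push_cast at h13 ⊢
          linarith only [h13]
        · have h13 : ((ip x u % M : ℕ) : ℤ) < (M:ℤ) := by exact_mod_cast hmodlt
          have h3 : (0:ℤ) ≤ (shf M W w alpha r x : ℤ) * ((∑ i, r i * u i : ℕ) : ℤ) := by
            positivity
          linarith only [h13, h3]
      have hvalN : ip (rhoMap n m M W w alpha r x) u % M
          + shf M W w alpha r x * (∑ i, r i * u i) = ip x u % M := by
        have h14 : ((ip (rhoMap n m M W w alpha r x) u % M : ℕ) : ℤ)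
            + (shf M W w alpha r x : ℤ) * ((∑ i, r i * u i : ℕ) : ℤ)
            = ((ip x u % M : ℕ) : ℤ) := by linarith only [hval]
        exact_mod_cast h14
      have hvalQ : ((ip (rhoMap n m M W w alpha r x) u % M : ℕ) : ℚ)
          + ((shf M W w alpha r x : ℕ) : ℚ) * ((∑ i, r i * u i : ℕ) : ℚ)
          = ((ip x u % M : ℕ) : ℚ) := by exact_mod_cast hvalN
      constructor
      · linarith only [hvalQ, hshg, hb1, h9, h10]
      · have hsg0 : (0:ℚ) ≤ ((shf M W w alpha r x : ℕ) : ℚ) * ((∑ i, r i * u i : ℕ) : ℚ) := by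
          positivity
        have h11 : (b u - δ) * (M:ℚ) ≤ b u * M :=
          mul_le_mul_of_nonneg_right (by linarith only [hεδ, hε]) hM0
        linarith only [hvalQ, hb2, hsg0, h11]
    · rw [hdivMalpha]
      exact hPyltQV x hxB
end
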